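/- arXiv:1907.12723 — 3 statements merged into one kernel-verified Lean document; each statement's English description precedes it below -/
import Mathlib

section
/- If a datum (c,d,B) is gaussian-extremizable, then so is the dual datum (d,c,B*). Moreover, D_g(c,d,B) = D_g(d,c,B*) holds for every datum, regardless of gaussian-extremizability. -/
open MeasureTheory LinearMap
open scoped RealInnerProductSpace BigOperators NNReal ENNReal

noncomputable section

namespace FRBL

/-- A positive semidefinite (self-adjoint) operator on a real inner product space. -/
def PosSemidef {G : Type*} [NormedAddCommGroup G] [InnerProductSpace ℝ G]
    (A : G →ₗ[ℝ] G) : Prop :=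
  A.IsSymmetric ∧ ∀ x : G, 0 ≤ ⟪A x, x⟫

/-- A positive definite (self-adjoint) operator on a real inner product space. -/
def PosDef {G : Type*} [NormedAddCommGroup G] [InnerProductSpace ℝ G]
    (A : G →ₗ[ℝ] G) : Prop :=
  A.IsSymmetric ∧ ∀ x : G, x ≠ 0 → 0 < ⟪A x, x⟫

variable {k m : ℕ}
  (E : Fin k → Type*) (F : Fin m → Type*)
  [∀ i, NormedAddCommGroup (E i)] [∀ i, InnerProductSpace ℝ (E i)]
  [∀ i, FiniteDimensional ℝ (E i)]
  [∀ i, MeasurableSpace (E i)] [∀ i, BorelSpace (E i)]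
  [∀ j, NormedAddCommGroup (F j)] [∀ j, InnerProductSpace ℝ (F j)]
  [∀ j, FiniteDimensional ℝ (F j)]
  [∀ j, MeasurableSpace (F j)] [∀ j, BorelSpace (F j)]
  (c : Fin k → ℝ) (d : Fin m → ℝ)
  (B : ∀ i j, E i →ₗ[ℝ] F j)

/-- The pointwise domination hypothesis of the forward-reverse Brascamp-Lieb inequality. -/
def Hyp (f : ∀ i, E i → ℝ≥0) (g : ∀ j, F j → ℝ≥0) : Prop :=
  ∀ x : ∀ i, E i,
    (∏ i, f i (x i) ^ c i) ≤ ∏ j, g j (∑ i, c i • B i j (x i)) ^ d j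

/-- `D₀` is an admissible constant for the forward-reverse Brascamp-Lieb inequality. -/
def IsBound (D₀ : ℝ) : Prop :=
  ∀ (f : ∀ i, E i → ℝ≥0) (g : ∀ j, F j → ℝ≥0),
    (∀ i, Measurable (f i)) → (∀ j, Measurable (g j)) →
    Hyp E F c d B f g →
    (∏ i, (∫⁻ x, (f i x : ℝ≥0∞)) ^ c i) ≤
      ENNReal.ofReal (Real.exp D₀) * ∏ j, (∫⁻ y, (g j y : ℝ≥0∞)) ^ d j

/-- The best constant `D(c,d,B)` in the forward-reverse Brascamp-Lieb inequality. -/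
def D : EReal :=
  sInf {x : EReal | ∃ D₀ : ℝ, x = (D₀ : EReal) ∧ IsBound E F c d B D₀}

/-- The gaussian constraint `Λ_c B* U_d B Λ_c ≤ V_c`, written via quadratic forms. -/
def GaussCon (V : ∀ i, E i →ₗ[ℝ] E i) (U : ∀ j, F j →ₗ[ℝ] F j) : Prop :=
  ∀ x : ∀ i, E i,
    (∑ j, d j * ⟪U j (∑ i, c i • B i j (x i)), ∑ i, c i • B i j (x i)⟫) ≤
      ∑ i, c i * ⟪V i (x i), x i⟫

/-- The objective functional in the definition of the gaussian constant. -/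
def gaussObj (V : ∀ i, E i →ₗ[ℝ] E i) (U : ∀ j, F j →ₗ[ℝ] F j) : ℝ :=
  (∑ j, d j * Real.log (LinearMap.det (U j)) -
    ∑ i, c i * Real.log (LinearMap.det (V i))) / 2

/-- The gaussian best constant `D_g(c,d,B)`. -/
def Dg : EReal :=
  sSup {x : EReal | ∃ (V : ∀ i, E i →ₗ[ℝ] E i) (U : ∀ j, F j →ₗ[ℝ] F j),
    (∀ i, PosDef (V i)) ∧ (∀ j, PosDef (U j)) ∧ GaussCon E F c d B V U ∧
    x = (gaussObj E F c d V U : EReal)}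

/-- The datum `(c,d,B)` is gaussian-extremizable: the supremum defining `D_g` is
finite and attained. -/
def GaussExt : Prop :=
  ∃ (V : ∀ i, E i →ₗ[ℝ] E i) (U : ∀ j, F j →ₗ[ℝ] F j),
    (∀ i, PosDef (V i)) ∧ (∀ j, PosDef (U j)) ∧ GaussCon E F c d B V U ∧
    Dg E F c d B = (gaussObj E F c d V U : EReal)

/-- The canonical linear equivalence between `E₀ = ⊕ᵢ Eᵢ` (as `PiLp 2`) and the pi type. -/
def toPi : PiLp 2 E ≃ₗ[ℝ] ∀ i, E i := WithLp.linearEquiv 2 ℝ (∀ i, E i)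

/-- Orthogonal projection `π_{E_i} : E₀ → E_i`. -/
def projL (i : Fin k) : PiLp 2 E →ₗ[ℝ] E i := (LinearMap.proj i).comp (toPi E).toLinearMap

/-- The embedding `E_i → E₀`. -/
def singleL (i : Fin k) : E i →ₗ[ℝ] PiLp 2 E :=
  (toPi E).symm.toLinearMap.comp (LinearMap.single ℝ E i)

/-- The map `B_j : E₀ → E^j`, `x ↦ ∑ᵢ B_{ij} π_{E_i} x`. -/
def Bop (j : Fin m) : PiLp 2 E →ₗ[ℝ] F j := ∑ i, (B i j).comp (projL E i)

/-- `Λ_c = ⊕ᵢ cᵢ id_{E_i}` as an operator on `E₀`. -/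
def Lam : PiLp 2 E →ₗ[ℝ] PiLp 2 E := ∑ i, c i • (singleL E i).comp (projL E i)

/-- The set `Π(A_1, …, A_k)` of positive semidefinite "couplings". -/
def Coupling (A : ∀ i, E i →ₗ[ℝ] E i) : Set (PiLp 2 E →ₗ[ℝ] PiLp 2 E) :=
  {P | PosSemidef P ∧ ∀ (i : Fin k) (v : E i),
    ⟪P (singleL E i v), singleL E i v⟫ = ⟪A i v, v⟫}

/-- The scaling condition `∑ᵢ cᵢ dim Eᵢ = ∑ⱼ dⱼ dim E^j`. -/
def ScalingCond : Prop :=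
  ∑ i, c i * (Module.finrank ℝ (E i) : ℝ) = ∑ j, d j * (Module.finrank ℝ (F j) : ℝ)

/-- A subspace `T ⊆ E₀` is of product form, i.e. `T = ⊕ᵢ π_{E_i} T`. -/
def ProductForm (T : Submodule ℝ (PiLp 2 E)) : Prop :=
  ∀ x ∈ T, ∀ i, singleL E i (projL E i x) ∈ T

/-- The dimension condition over product-form subspaces. -/
def DimCond : Prop :=
  ∀ T : Submodule ℝ (PiLp 2 E), ProductForm E T →
    (∑ i, c i * (Module.finrank ℝ (T.map (projL E i)) : ℝ)) ≤
      ∑ j, d j * (Module.finrank ℝ (T.map (Bop E F B j)) : ℝ)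

/-- A critical subspace. -/
def IsCritical (T : Submodule ℝ (PiLp 2 E)) : Prop :=
  T ≠ ⊥ ∧ T ≠ ⊤ ∧ ProductForm E T ∧
    ∑ i, c i * (Module.finrank ℝ (T.map (projL E i)) : ℝ) =
      ∑ j, d j * (Module.finrank ℝ (T.map (Bop E F B j)) : ℝ)

/-- The datum is simple if it has no critical subspace. -/
def Simple : Prop := ∀ T : Submodule ℝ (PiLp 2 E), ¬ IsCritical E F c d B T

end FRBL

namespace FRBL

/-- `log det` with value `−∞` on operators with non-positive determinant
(in particular on singular positive-semidefinite operators). -/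
def elogdet {G : Type*} [AddCommGroup G] [Module ℝ G] (A : G →ₗ[ℝ] G) : EReal :=
  if 0 < LinearMap.det A then ((Real.log (LinearMap.det A) : ℝ) : EReal) else ⊥

variable {k m : ℕ}
  (E : Fin k → Type*) (F : Fin m → Type*)
  [∀ i, NormedAddCommGroup (E i)] [∀ i, InnerProductSpace ℝ (E i)]
  [∀ i, FiniteDimensional ℝ (E i)]
  [∀ j, NormedAddCommGroup (F j)] [∀ j, InnerProductSpace ℝ (F j)]
  [∀ j, FiniteDimensional ℝ (F j)]
  (c : Fin k → ℝ) (d : Fin m → ℝ)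
  (B : ∀ i j, E i →ₗ[ℝ] F j)

/-- The map `Q_j := B_j Λ_c : E₀ → E^j`. -/
def BLam (j : Fin m) : PiLp 2 E →ₗ[ℝ] F j := (Bop E F B j).comp (Lam E c)

/-- The optimality condition of Theorem 2 (structure of gaussian extremizers):
each `B_j Λ_c Π Λ_c B_j*` is invertible and
`∑ⱼ dⱼ Λ_c B_j* (B_j Λ_c Π Λ_c B_j*)⁻¹ B_j Λ_c ≤ V_c` in the quadratic-form sense. -/
def ExtCond (V : ∀ i, E i →ₗ[ℝ] E i) (P : PiLp 2 E →ₗ[ℝ] PiLp 2 E) : Prop :=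
  (∀ j, IsUnit ((BLam E F c B j) ∘ₗ P ∘ₗ LinearMap.adjoint (BLam E F c B j))) ∧
  ∀ x : PiLp 2 E,
    (∑ j, d j * ⟪Ring.inverse ((BLam E F c B j) ∘ₗ P ∘ₗ LinearMap.adjoint (BLam E F c B j))
        (BLam E F c B j x), BLam E F c B j x⟫) ≤
      ∑ i, c i * ⟪V i (projL E i x), projL E i x⟫

/-- A geometric datum. -/
def Geometric : Prop :=
  ScalingCond E F c d ∧
  ∃ S ∈ Coupling E (fun i => (LinearMap.id : E i →ₗ[ℝ] E i)),
    (∀ j, (BLam E F c B j) ∘ₗ S ∘ₗ LinearMap.adjoint (BLam E F c B j) = LinearMap.id) ∧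
    ∀ x : PiLp 2 E, (∑ j, d j * ⟪BLam E F c B j x, BLam E F c B j x⟫) ≤ ⟪Lam E c x, x⟫

/-- Equivalence of data: `B'_j = C_j⁻¹ B_j C⁻¹` for invertible `C, C_j`. -/
def EquivData (B' : ∀ i j, E i →ₗ[ℝ] F j) : Prop :=
  ∃ (C : PiLp 2 E ≃ₗ[ℝ] PiLp 2 E) (Cj : ∀ j, F j ≃ₗ[ℝ] F j),
    ∀ j, Bop E F B' j =
      ((Cj j).symm.toLinearMap ∘ₗ Bop E F B j) ∘ₗ C.symm.toLinearMap

/-- `V_c = ⊕ᵢ cᵢ Vᵢ` as an operator on `E₀`. -/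
def blockDiag (V : ∀ i, E i →ₗ[ℝ] E i) : PiLp 2 E →ₗ[ℝ] PiLp 2 E :=
  ∑ i, c i • ((singleL E i) ∘ₗ (V i)) ∘ₗ (projL E i)

/-- `Θ = V_c − ∑ⱼ dⱼ Λ_c B_j* U_j B_j Λ_c`. -/
def Theta (V : ∀ i, E i →ₗ[ℝ] E i) (U : ∀ j, F j →ₗ[ℝ] F j) :
    PiLp 2 E →ₗ[ℝ] PiLp 2 E :=
  blockDiag E c V -
    ∑ j, d j • (LinearMap.adjoint (BLam E F c B j) ∘ₗ (U j)) ∘ₗ (BLam E F c B j)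

end FRBL

namespace FRBL

/-- Borel structure on submodules (inherited from the ambient space). -/
instance subBorel {G : Type*} [AddCommGroup G] [Module ℝ G] [TopologicalSpace G]
    [MeasurableSpace G] [BorelSpace G] (T : Submodule ℝ G) : BorelSpace ↥T :=
  Subtype.borelSpace (T : Set G)

/-- The maximal dimension of a subspace on which the self-adjoint operator `Q` is positive
definite; by Sylvester's law of inertia this is the number of positive eigenvalues of `Q`,
counted with multiplicity. -/
def posIndex {H : Type*} [NormedAddCommGroup H] [InnerProductSpace ℝ H]
    (Q : H →ₗ[ℝ] H) : ℕ :=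
  sSup {r : ℕ | ∃ W : Submodule ℝ H,
    (∀ x ∈ W, x ≠ 0 → 0 < ⟪Q x, x⟫) ∧ Module.finrank ℝ W = r}

/-- The standard gaussian probability measure on a Euclidean space. -/
def stdGaussian (G : Type*) [NormedAddCommGroup G] [InnerProductSpace ℝ G]
    [FiniteDimensional ℝ G] [MeasurableSpace G] [BorelSpace G] :
    Measure G :=
  volume.withDensity fun x =>
    ENNReal.ofReal ((2 * Real.pi) ^ (-(Module.finrank ℝ G : ℝ) / 2) *
      Real.exp (-‖x‖ ^ 2 / 2))

/-- `K_s = (|s|^{1/s} |s'|^{1/s'})^{1/2}`. -/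
def Kconst (s s' : ℝ) : ℝ := Real.sqrt (|s| ^ (1 / s) * |s'| ^ (1 / s'))

variable {k m : ℕ}
  (E : Fin k → Type*) (F : Fin m → Type*)
  [∀ i, NormedAddCommGroup (E i)] [∀ i, InnerProductSpace ℝ (E i)]
  [∀ i, FiniteDimensional ℝ (E i)]
  [∀ j, NormedAddCommGroup (F j)] [∀ j, InnerProductSpace ℝ (F j)]
  [∀ j, FiniteDimensional ℝ (F j)]
  (c : Fin k → ℝ) (d : Fin m → ℝ)
  (B : ∀ i j, E i →ₗ[ℝ] F j)

/-- The objective functional `∑ⱼ dⱼ log det Uⱼ − ∑ᵢ cᵢ log det Vᵢ`. -/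
def objective (V : ∀ i, E i →ₗ[ℝ] E i) (U : ∀ j, F j →ₗ[ℝ] F j) : ℝ :=
  ∑ j, d j * Real.log (LinearMap.det (U j)) - ∑ i, c i * Real.log (LinearMap.det (V i))

/-- Feasibility for the optimization problem defining `D_g`: positive definiteness
together with the constraint `Θ ≥ 0`. -/
def Admissible (V : ∀ i, E i →ₗ[ℝ] E i) (U : ∀ j, F j →ₗ[ℝ] F j) : Prop :=
  (∀ i, PosDef (V i)) ∧ (∀ j, PosDef (U j)) ∧ PosSemidef (Theta E F c d B V U)

/-- Global maximality in the optimization problem defining `D_g`. -/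
def IsGlobalMax (V : ∀ i, E i →ₗ[ℝ] E i) (U : ∀ j, F j →ₗ[ℝ] F j) : Prop :=
  Admissible E F c d B V U ∧
    ∀ V' U', Admissible E F c d B V' U' →
      objective E F c d V' U' ≤ objective E F c d V U

/-- Local maximality in the optimization problem defining `D_g`. -/
def IsLocalMax (V : ∀ i, E i →ₗ[ℝ] E i) (U : ∀ j, F j →ₗ[ℝ] F j) : Prop :=
  Admissible E F c d B V U ∧
    ∃ ε : ℝ, 0 < ε ∧
      ∀ V' U', Admissible E F c d B V' U' →
        (∀ i, ‖LinearMap.toContinuousLinearMap (V' i - V i)‖ < ε) →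
        (∀ j, ‖LinearMap.toContinuousLinearMap (U' j - U j)‖ < ε) →
        objective E F c d V' U' ≤ objective E F c d V U

end FRBL

namespace FRBL

variable {k m : ℕ}
  (E : Fin k → Type*) (F : Fin m → Type*)
  [∀ i, NormedAddCommGroup (E i)] [∀ i, InnerProductSpace ℝ (E i)]
  [∀ i, FiniteDimensional ℝ (E i)]
  [∀ i, MeasurableSpace (E i)] [∀ i, BorelSpace (E i)]
  [∀ j, NormedAddCommGroup (F j)] [∀ j, InnerProductSpace ℝ (F j)]
  [∀ j, FiniteDimensional ℝ (F j)]
  [∀ j, MeasurableSpace (F j)] [∀ j, BorelSpace (F j)]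

section DualityHelpers

variable {G : Type*} [NormedAddCommGroup G] [InnerProductSpace ℝ G]

lemma PosDef.inner_nonneg' {A : G →ₗ[ℝ] G} (hA : PosDef A) (x : G) : 0 ≤ ⟪A x, x⟫ := by
  rcases eq_or_ne x 0 with rfl | hx
  · simp
  · exact (hA.2 x hx).le

/-- A positive definite operator on a finite-dimensional space has a positive definite
inverse, whose `log det` is the negative of the original `log det`. -/
lemma posDef_exists_inverse [FiniteDimensional ℝ G] {A : G →ₗ[ℝ] G} (hA : PosDef A) :
    ∃ Ai : G →ₗ[ℝ] G, PosDef Ai ∧ (∀ x, A (Ai x) = x) ∧ (∀ x, Ai (A x) = x) ∧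
      Real.log (LinearMap.det Ai) = - Real.log (LinearMap.det A) := by
  have hinj : Function.Injective A := by
    intro x y hxy
    by_contra h
    have hne : x - y ≠ 0 := sub_ne_zero.mpr h
    have hpos := hA.2 (x - y) hne
    rw [map_sub, hxy, sub_self] at hpos
    simp at hpos
  have hbij : Function.Bijective A := ⟨hinj, (LinearMap.injective_iff_surjective).mp hinj⟩
  let e := LinearEquiv.ofBijective A hbij
  have he : ∀ x, e x = A x := fun _ => rfl
  have hAe : ∀ x, A (e.symm x) = x := fun x => by
    rw [← he]; exact e.apply_symm_apply x
  have heA : ∀ x, e.symm (A x) = x := fun x => by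
    rw [← he]; exact e.symm_apply_apply x
  refine ⟨e.symm.toLinearMap, ⟨?_, ?_⟩, hAe, heA, ?_⟩
  · -- symmetric
    intro x y
    have h1 : ⟪A (e.symm x), e.symm y⟫ = ⟪e.symm x, A (e.symm y)⟫ := hA.1 _ _
    calc ⟪e.symm.toLinearMap x, y⟫ = ⟪e.symm x, A (e.symm y)⟫ := by rw [hAe y]; rfl
      _ = ⟪A (e.symm x), e.symm y⟫ := h1.symm
      _ = ⟪x, e.symm.toLinearMap y⟫ := by rw [hAe x]; rfl
  · -- positive
    intro x hx
    have hu : e.symm x ≠ 0 := by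
      intro h0
      apply hx
      rw [← hAe x, h0, map_zero]
    have := hA.2 (e.symm x) hu
    calc (0:ℝ) < ⟪A (e.symm x), e.symm x⟫ := this
      _ = ⟪e.symm x, A (e.symm x)⟫ := hA.1 _ _
      _ = ⟪e.symm.toLinearMap x, x⟫ := by rw [hAe x]; rfl
  · -- determinant
    have hcomp : (e.symm.toLinearMap ∘ₗ A) = LinearMap.id := by
      ext x; exact heA x
    have hdet : LinearMap.det e.symm.toLinearMap * LinearMap.det A = 1 := by
      rw [← LinearMap.det_comp, hcomp, LinearMap.det_id]
    have hAne : LinearMap.det A ≠ 0 := by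
      intro h; rw [h, mul_zero] at hdet; exact zero_ne_one hdet
    have : LinearMap.det e.symm.toLinearMap = (LinearMap.det A)⁻¹ :=
      eq_inv_of_mul_eq_one_left hdet
    rw [this, Real.log_inv]

/-- Weighted Cauchy-Schwarz inequality for a family of positive (semi)definite forms. -/
lemma weighted_cauchy_schwarz {ι : Type*} [Fintype ι] {H : ι → Type*}
    [∀ j, NormedAddCommGroup (H j)] [∀ j, InnerProductSpace ℝ (H j)]
    (w : ι → ℝ) (hw : ∀ j, 0 ≤ w j) (U : ∀ j, H j →ₗ[ℝ] H j) (hU : ∀ j, PosDef (U j))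
    (a b : ∀ j, H j) :
    (∑ j, w j * ⟪U j (a j), b j⟫) ^ 2 ≤
      (∑ j, w j * ⟪U j (a j), a j⟫) * (∑ j, w j * ⟪U j (b j), b j⟫) := by
  set Ca := ∑ j, w j * ⟪U j (a j), a j⟫ with hCa
  set Cb := ∑ j, w j * ⟪U j (b j), b j⟫ with hCb
  set Cab := ∑ j, w j * ⟪U j (a j), b j⟫ with hCab
  have key : ∀ r : ℝ, 0 ≤ Cb * (r * r) + (2 * Cab) * r + Ca := by
    intro r
    have expand : ∀ j, w j * ⟪U j (a j + r • b j), a j + r • b j⟫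
        = (w j * ⟪U j (b j), b j⟫) * (r * r) + (2 * (w j * ⟪U j (a j), b j⟫)) * r
          + w j * ⟪U j (a j), a j⟫ := by
      intro j
      have hsymm : ⟪U j (b j), a j⟫ = ⟪U j (a j), b j⟫ := by
        rw [(hU j).1 (b j) (a j), real_inner_comm]
      rw [map_add, LinearMap.map_smul, inner_add_left, inner_add_right, inner_add_right,
        real_inner_smul_left, real_inner_smul_right, real_inner_smul_left,
        real_inner_smul_right, hsymm]
      ring
    have hsum : Cb * (r * r) + (2 * Cab) * r + Ca
        = ∑ j, w j * ⟪U j (a j + r • b j), a j + r • b j⟫ := by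
      rw [Finset.sum_congr rfl fun j _ => expand j]
      rw [Finset.sum_add_distrib, Finset.sum_add_distrib, ← Finset.sum_mul,
        ← Finset.sum_mul, ← hCa, ← hCb, ← Finset.mul_sum, ← hCab]
    rw [hsum]
    exact Finset.sum_nonneg fun j _ =>
      mul_nonneg (hw j) ((hU j).inner_nonneg' _)
  have hd := discrim_le_zero key
  rw [discrim] at hd
  nlinarith [hd]

end DualityHelpers

section DualStep

variable {k m : ℕ}
  {E : Fin k → Type*} {F : Fin m → Type*}
  [∀ i, NormedAddCommGroup (E i)] [∀ i, InnerProductSpace ℝ (E i)]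
  [∀ i, FiniteDimensional ℝ (E i)]
  [∀ j, NormedAddCommGroup (F j)] [∀ j, InnerProductSpace ℝ (F j)]
  [∀ j, FiniteDimensional ℝ (F j)]

/-- Main transfer step: a feasible gaussian pair for `(c,d,B)` produces a feasible
gaussian pair for the dual datum with the same objective value. -/
lemma dual_step (c : Fin k → ℝ) (d : Fin m → ℝ) (B : ∀ i j, E i →ₗ[ℝ] F j)
    (hc : ∀ i, 0 ≤ c i) (hd : ∀ j, 0 ≤ d j)
    (V : ∀ i, E i →ₗ[ℝ] E i) (U : ∀ j, F j →ₗ[ℝ] F j)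
    (hV : ∀ i, PosDef (V i)) (hU : ∀ j, PosDef (U j))
    (hcon : GaussCon E F c d B V U) :
    ∃ (V' : ∀ j, F j →ₗ[ℝ] F j) (U' : ∀ i, E i →ₗ[ℝ] E i),
      (∀ j, PosDef (V' j)) ∧ (∀ i, PosDef (U' i)) ∧
      GaussCon F E d c (fun j i => LinearMap.adjoint (B i j)) V' U' ∧
      gaussObj F E d c V' U' = gaussObj E F c d V U := by
  choose Vi hViPD hVVi hViV hVilog using fun i => posDef_exists_inverse (hV i)
  choose Ui hUiPD hUUi hUiU hUilog using fun j => posDef_exists_inverse (hU j)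
  refine ⟨Ui, Vi, hUiPD, hViPD, ?_, ?_⟩
  · -- the dual gaussian constraint
    intro y
    show (∑ i, c i * ⟪Vi i (∑ j, d j • LinearMap.adjoint (B i j) (y j)),
        ∑ j, d j • LinearMap.adjoint (B i j) (y j)⟫)
      ≤ ∑ j, d j * ⟪Ui j (y j), y j⟫
    set z : ∀ i, E i := fun i => ∑ j, d j • LinearMap.adjoint (B i j) (y j) with hzdef
    set x : ∀ i, E i := fun i => Vi i (z i) with hxdef
    set t : ℝ := ∑ i, c i * ⟪Vi i (z i), z i⟫ with htdef
    set s : ℝ := ∑ j, d j * ⟪Ui j (y j), y j⟫ with hsdef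
    show t ≤ s
    set T : ∀ j, F j := fun j => ∑ i, c i • B i j (x i) with hTdef
    set w : ∀ j, F j := fun j => Ui j (y j) with hwdef
    have key1 : t = ∑ j, d j * ⟪U j (T j), w j⟫ := by
      have step1 : t = ∑ i, ∑ j, c i * (d j * ⟪B i j (x i), y j⟫) := by
        rw [htdef]
        refine Finset.sum_congr rfl fun i _ => ?_
        rw [← Finset.mul_sum]
        congr 1
        calc ⟪Vi i (z i), z i⟫ = ⟪x i, ∑ j, d j • LinearMap.adjoint (B i j) (y j)⟫ := rfl
          _ = ∑ j, d j * ⟪x i, LinearMap.adjoint (B i j) (y j)⟫ := by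
              rw [inner_sum]
              exact Finset.sum_congr rfl fun j _ => real_inner_smul_right _ _ _
          _ = ∑ j, d j * ⟪B i j (x i), y j⟫ := by
              refine Finset.sum_congr rfl fun j _ => ?_
              rw [LinearMap.adjoint_inner_right]
      have step2 : ∀ j, d j * ⟪U j (T j), w j⟫ = ∑ i, c i * (d j * ⟪B i j (x i), y j⟫) := by
        intro j
        have hUw : ⟪U j (T j), w j⟫ = ⟪T j, y j⟫ := by
          calc ⟪U j (T j), Ui j (y j)⟫ = ⟪T j, U j (Ui j (y j))⟫ := (hU j).1 _ _
            _ = ⟪T j, y j⟫ := by rw [hUUi j]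
        rw [hwdef, hUw, hTdef]
        rw [sum_inner, Finset.mul_sum]
        refine Finset.sum_congr rfl fun i _ => ?_
        rw [real_inner_smul_left]
        ring
      rw [step1, Finset.sum_comm]
      exact (Finset.sum_congr rfl fun j _ => (step2 j).symm)
    have key3 : (∑ j, d j * ⟪U j (T j), T j⟫) ≤ ∑ i, c i * ⟪V i (x i), x i⟫ := hcon x
    have key4 : (∑ i, c i * ⟪V i (x i), x i⟫) = t := by
      rw [htdef]
      refine Finset.sum_congr rfl fun i _ => ?_
      congr 1
      calc ⟪V i (x i), x i⟫ = ⟪z i, x i⟫ := by rw [hxdef]; rw [hVVi i]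
        _ = ⟪Vi i (z i), z i⟫ := real_inner_comm _ _
    have key5 : (∑ j, d j * ⟪U j (w j), w j⟫) = s := by
      rw [hsdef]
      refine Finset.sum_congr rfl fun j _ => ?_
      congr 1
      calc ⟪U j (w j), w j⟫ = ⟪y j, w j⟫ := by rw [hwdef]; rw [hUUi j]
        _ = ⟪Ui j (y j), y j⟫ := real_inner_comm _ _
    have hcs := weighted_cauchy_schwarz d hd U hU T w
    have ht0 : 0 ≤ t := by
      rw [htdef]
      exact Finset.sum_nonneg fun i _ => mul_nonneg (hc i) ((hViPD i).inner_nonneg' _)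
    have hs0 : 0 ≤ s := by
      rw [hsdef]
      exact Finset.sum_nonneg fun j _ => mul_nonneg (hd j) ((hUiPD j).inner_nonneg' _)
    have hts : t ^ 2 ≤ t * s := by
      calc t ^ 2 = (∑ j, d j * ⟪U j (T j), w j⟫) ^ 2 := by rw [key1]
        _ ≤ (∑ j, d j * ⟪U j (T j), T j⟫) * (∑ j, d j * ⟪U j (w j), w j⟫) := hcs
        _ ≤ t * s := by
            rw [key5]
            exact mul_le_mul_of_nonneg_right (key3.trans_eq key4) hs0
    rcases eq_or_lt_of_le ht0 with h0 | h0
    · linarith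
    · nlinarith
  · -- equality of objectives
    rw [gaussObj, gaussObj]
    simp only [hVilog, hUilog, mul_neg, Finset.sum_neg_distrib]
    ring

/-- The feasible-value set of the dual datum contains that of the primal datum. -/
lemma dg_set_subset (c : Fin k → ℝ) (d : Fin m → ℝ) (B : ∀ i j, E i →ₗ[ℝ] F j)
    (hc : ∀ i, 0 ≤ c i) (hd : ∀ j, 0 ≤ d j) :
    {x : EReal | ∃ (V : ∀ i, E i →ₗ[ℝ] E i) (U : ∀ j, F j →ₗ[ℝ] F j),
      (∀ i, PosDef (V i)) ∧ (∀ j, PosDef (U j)) ∧ GaussCon E F c d B V U ∧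
      x = (gaussObj E F c d V U : EReal)} ⊆
    {x : EReal | ∃ (V : ∀ j, F j →ₗ[ℝ] F j) (U : ∀ i, E i →ₗ[ℝ] E i),
      (∀ j, PosDef (V j)) ∧ (∀ i, PosDef (U i)) ∧
      GaussCon F E d c (fun j i => LinearMap.adjoint (B i j)) V U ∧
      x = (gaussObj F E d c V U : EReal)} := by
  rintro x ⟨V, U, hV, hU, hcon, rfl⟩
  obtain ⟨V', U', hV', hU', hcon', hobj⟩ := dual_step c d B hc hd V U hV hU hcon
  exact ⟨V', U', hV', hU', hcon', by rw [hobj]⟩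

end DualStep

/-- **Theorem.** If a datum `(c,d,B)` is gaussian-extremizable, then so is the dual
datum `(d,c,B*)`.  Moreover `D_g(c,d,B) = D_g(d,c,B*)` holds for every datum, regardless
of gaussian-extremizability. -/
theorem gaussExt_dual_and_Dg_eq_Dg_dual
    (c : Fin k → ℝ) (d : Fin m → ℝ) (B : ∀ i j, E i →ₗ[ℝ] F j)
    (hc : ∀ i, 0 < c i) (hd : ∀ j, 0 < d j) :
    (GaussExt E F c d B → GaussExt F E d c (fun j i => LinearMap.adjoint (B i j))) ∧
    Dg E F c d B = Dg F E d c (fun j i => LinearMap.adjoint (B i j)) := by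
  set B' : ∀ j i, F j →ₗ[ℝ] E i := fun j i => LinearMap.adjoint (B i j) with hB'
  have hBB : (fun (i : Fin k) (j : Fin m) => LinearMap.adjoint (B' j i)) = B := by
    funext i j
    simp [hB']
  have hsub1 := dg_set_subset c d B (fun i => (hc i).le) (fun j => (hd j).le)
  have hsub2 := dg_set_subset d c B' (fun j => (hd j).le) (fun i => (hc i).le)
  rw [hBB] at hsub2
  have hset : {x : EReal | ∃ (V : ∀ i, E i →ₗ[ℝ] E i) (U : ∀ j, F j →ₗ[ℝ] F j),
      (∀ i, PosDef (V i)) ∧ (∀ j, PosDef (U j)) ∧ GaussCon E F c d B V U ∧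
      x = (gaussObj E F c d V U : EReal)} =
      {x : EReal | ∃ (V : ∀ j, F j →ₗ[ℝ] F j) (U : ∀ i, E i →ₗ[ℝ] E i),
      (∀ j, PosDef (V j)) ∧ (∀ i, PosDef (U i)) ∧
      GaussCon F E d c B' V U ∧
      x = (gaussObj F E d c V U : EReal)} := Set.Subset.antisymm hsub1 hsub2
  have hDg : Dg E F c d B = Dg F E d c B' := congrArg sSup hset
  refine ⟨?_, hDg⟩
  rintro ⟨V, U, hV, hU, hcon, hval⟩
  obtain ⟨V', U', hV', hU', hcon', hobj⟩ :=
    dual_step c d B (fun i => (hc i).le) (fun j => (hd j).le) V U hV hU hcon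
  exact ⟨V', U', hV', hU', hcon', by rw [← hDg, hval, hobj]⟩

end FRBL
end
end

section
/- (Decomposability at critical subspaces, gaussian constant.) If T ⊂ E_0 is a critical subspace for the datum (c,d,B), then D_g(c,d,B) = D_g(c,d,B_T) + D_g(c,d,B_{E_0/T}). -/
open MeasureTheory LinearMap
open scoped RealInnerProductSpace BigOperators NNReal ENNReal

noncomputable section

namespace FRBL

section Prelim
variable {G : Type*} [NormedAddCommGroup G] [InnerProductSpace ℝ G]

theorem PosDef.posSemidef {A : G →ₗ[ℝ] G} (hA : PosDef A) : PosSemidef A := by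
  refine ⟨hA.1, fun x => ?_⟩
  rcases eq_or_ne x 0 with rfl | hx
  · simp
  · exact (hA.2 x hx).le

/-- absorption inequality for PSD quadratic forms -/
theorem PosSemidef.absorb {A : G →ₗ[ℝ] G} (hA : PosSemidef A) {δ : ℝ} (hδ : 0 < δ)
    (u v : G) :
    ⟪A (u + v), u + v⟫ ≤ (1 + δ) * ⟪A u, u⟫ + (1 + δ⁻¹) * ⟪A v, v⟫ := by
  have hsym := hA.1
  have expand : ⟪A (u + v), u + v⟫ = ⟪A u, u⟫ + 2 * ⟪A u, v⟫ + ⟪A v, v⟫ := by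
    have h1 : ⟪A v, u⟫ = ⟪A u, v⟫ := by
      rw [hsym v u, real_inner_comm]
    simp only [map_add, inner_add_left, inner_add_right, h1]
    ring
  have key : 2 * ⟪A u, v⟫ ≤ δ * ⟪A u, u⟫ + δ⁻¹ * ⟪A v, v⟫ := by
    set a := Real.sqrt δ with ha
    have hsd : (0:ℝ) < a := Real.sqrt_pos.2 hδ
    have hs2 : a * a = δ := Real.mul_self_sqrt hδ.le
    have hs3 : a⁻¹ * a⁻¹ = δ⁻¹ := by rw [← mul_inv, hs2]
    have h0 := hA.2 (a • u - a⁻¹ • v)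
    have e1 : A (a • u - a⁻¹ • v) = a • A u - a⁻¹ • A v := by
      simp [map_sub, _root_.map_smul]
    rw [e1] at h0
    simp only [inner_sub_left, inner_sub_right, real_inner_smul_left,
      real_inner_smul_right] at h0
    have h1 : ⟪A v, u⟫ = ⟪A u, v⟫ := by rw [hsym v u, real_inner_comm]
    rw [h1] at h0
    have hs4 : a * a⁻¹ = 1 := mul_inv_cancel₀ hsd.ne'
    have key0 : a * (a * ⟪A u, u⟫) - a * (a⁻¹ * ⟪A u, v⟫) -
        (a⁻¹ * (a * ⟪A u, v⟫) - a⁻¹ * (a⁻¹ * ⟪A v, v⟫)) =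
        δ * ⟪A u, u⟫ - 2 * ⟪A u, v⟫ + δ⁻¹ * ⟪A v, v⟫ := by
      linear_combination ⟪A u, u⟫ * hs2 + ⟪A v, v⟫ * hs3 - 2 * ⟪A u, v⟫ * hs4
    rw [key0] at h0
    linarith
  have hδ1 : (0:ℝ) < 1 + δ := by linarith
  nlinarith [expand, key]

variable [FiniteDimensional ℝ G]

/-- PD implies positive lower bound on quadratic form. -/
theorem PosDef.exists_lower {A : G →ₗ[ℝ] G} (hA : PosDef A) :
    ∃ lam : ℝ, 0 < lam ∧ ∀ x : G, lam * ‖x‖ ^ 2 ≤ ⟪A x, x⟫ := by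
  by_cases hG : Subsingleton G
  · refine ⟨1, one_pos, fun x => ?_⟩
    have : x = 0 := Subsingleton.elim x 0
    subst this; simp
  · have : Nontrivial G := not_subsingleton_iff_nontrivial.mp hG
    have hcomp : IsCompact (Metric.sphere (0:G) 1) := isCompact_sphere 0 1
    have hne : (Metric.sphere (0:G) 1).Nonempty := NormedSpace.sphere_nonempty.2 zero_le_one
    have hcont : Continuous fun x : G => ⟪A x, x⟫ := by
      have hAc : Continuous A := A.continuous_of_finiteDimensional
      exact continuous_inner.comp (hAc.prodMk continuous_id)
    obtain ⟨x₀, hx₀, hmin⟩ := hcomp.exists_isMinOn hne hcont.continuousOn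
    have hx₀n : ‖x₀‖ = 1 := by simpa using hx₀
    have hx₀0 : x₀ ≠ 0 := by intro h; rw [h] at hx₀n; simp at hx₀n
    refine ⟨⟪A x₀, x₀⟫, hA.2 x₀ hx₀0, fun x => ?_⟩
    rcases eq_or_ne x 0 with rfl | hx
    · simp
    · have hxn : (0:ℝ) < ‖x‖ := norm_pos_iff.2 hx
      have hu : (‖x‖⁻¹ • x) ∈ Metric.sphere (0:G) 1 := by
        simp [norm_smul, abs_of_pos (inv_pos.2 hxn), inv_mul_cancel₀ hxn.ne']
      have hval : ⟪A (‖x‖⁻¹ • x), ‖x‖⁻¹ • x⟫ = ‖x‖⁻¹ * ‖x‖⁻¹ * ⟪A x, x⟫ := by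
        rw [_root_.map_smul]
        rw [real_inner_smul_left, real_inner_smul_right]; ring
      have hthis : ⟪A x₀, x₀⟫ ≤ ‖x‖⁻¹ * ‖x‖⁻¹ * ⟪A x, x⟫ := by
        simpa only [hval] using (isMinOn_iff.mp hmin) _ hu
      have h2 : ⟪A x₀, x₀⟫ * ‖x‖ ^ 2 ≤ ‖x‖⁻¹ * ‖x‖⁻¹ * ⟪A x, x⟫ * ‖x‖ ^ 2 :=
        mul_le_mul_of_nonneg_right hthis (by positivity)
      calc ⟪A x₀, x₀⟫ * ‖x‖ ^ 2 ≤ ‖x‖⁻¹ * ‖x‖⁻¹ * ⟪A x, x⟫ * ‖x‖ ^ 2 := h2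
        _ = ⟪A x, x⟫ := by field_simp [pow_two]

/-- upper bound on quadratic form of any operator. -/
theorem exists_upper (A : G →ₗ[ℝ] G) :
    ∃ mu : ℝ, 0 ≤ mu ∧ ∀ x : G, ⟪A x, x⟫ ≤ mu * ‖x‖ ^ 2 := by
  refine ⟨‖LinearMap.toContinuousLinearMap A‖, norm_nonneg _, fun x => ?_⟩
  calc ⟪A x, x⟫ ≤ ‖A x‖ * ‖x‖ := real_inner_le_norm _ _
    _ ≤ ‖LinearMap.toContinuousLinearMap A‖ * ‖x‖ * ‖x‖ := by
        have := (LinearMap.toContinuousLinearMap A).le_opNorm x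
        exact mul_le_mul_of_nonneg_right (by simpa using this) (norm_nonneg _)
    _ = ‖LinearMap.toContinuousLinearMap A‖ * ‖x‖ ^ 2 := by ring

end Prelim

section DetPos
variable {G : Type*} [NormedAddCommGroup G] [InnerProductSpace ℝ G] [FiniteDimensional ℝ G]

theorem PosDef.det_pos_lin {A : G →ₗ[ℝ] G} (hA : PosDef A) : 0 < LinearMap.det A := by
  classical
  set b := stdOrthonormalBasis ℝ G with hb
  set M := LinearMap.toMatrix b.toBasis b.toBasis A with hM
  have hentry : ∀ i j, M i j = ⟪b i, A (b j)⟫ := by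
    intro i j
    rw [hM, LinearMap.toMatrix_apply, OrthonormalBasis.coe_toBasis,
      OrthonormalBasis.coe_toBasis_repr_apply, OrthonormalBasis.repr_apply_apply]
  have horth : ∀ i j, ⟪b i, b j⟫ = if i = j then (1:ℝ) else 0 :=
    orthonormal_iff_ite.mp b.orthonormal
  have hherm : M.IsHermitian := by
    ext i j
    simp only [Matrix.conjTranspose_apply, star_trivial]
    rw [hentry i j, hentry j i, ← hA.1 (b j) (b i), real_inner_comm]
  have hv : ∀ (x : Fin (Module.finrank ℝ G) → ℝ) i, ⟪b i, ∑ j, x j • b j⟫ = x i := by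
    intro x i
    rw [inner_sum]
    simp only [real_inner_smul_right, horth]
    simp [Finset.sum_ite_eq' Finset.univ i]
  have hposM : M.PosDef := by
    refine Matrix.PosDef.of_dotProduct_mulVec_pos hherm fun x hx => ?_
    set v := ∑ j, x j • b j with hvdef
    have hvz : v ≠ 0 := by
      intro h
      apply hx
      funext i
      have := hv x i
      rw [← hvdef, h] at this
      simpa using this.symm
    have hdot : dotProduct (star x) (M.mulVec x) = ⟪v, A v⟫ := by
      have hAv : ∀ i, ⟪b i, A v⟫ = ∑ j, M i j * x j := by
        intro i
        rw [hvdef, map_sum, inner_sum]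
        refine Finset.sum_congr rfl fun j _ => ?_
        rw [_root_.map_smul, real_inner_smul_right, hentry i j]
        ring
      have hvAv : ⟪v, A v⟫ = ∑ i, x i * ⟪b i, A v⟫ := by
        rw [hvdef, sum_inner]
        exact Finset.sum_congr rfl fun i _ => by rw [real_inner_smul_left]
      rw [hvAv]
      simp only [star_trivial, dotProduct, Matrix.mulVec, hAv]
    rw [hdot]
    have := hA.2 v hvz
    rw [real_inner_comm] at this
    exact this
  have := hposM.det_pos
  rwa [hM, LinearMap.det_toMatrix] at this

end DetPos

section BlockDet
variable {M N : Type*} [AddCommGroup M] [Module ℝ M] [AddCommGroup N] [Module ℝ N]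
  [FiniteDimensional ℝ M] [FiniteDimensional ℝ N]

/-- upper-triangular block map on a product. -/
def prodUT (P : M →ₗ[ℝ] M) (Q : N →ₗ[ℝ] M) (R : N →ₗ[ℝ] N) : M × N →ₗ[ℝ] M × N :=
  LinearMap.prod ((P ∘ₗ LinearMap.fst ℝ M N) + (Q ∘ₗ LinearMap.snd ℝ M N))
    (R ∘ₗ LinearMap.snd ℝ M N)

/-- lower-triangular block map on a product. -/
def prodLT (P : M →ₗ[ℝ] M) (Q : M →ₗ[ℝ] N) (R : N →ₗ[ℝ] N) : M × N →ₗ[ℝ] M × N :=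
  LinearMap.prod (P ∘ₗ LinearMap.fst ℝ M N)
    ((Q ∘ₗ LinearMap.fst ℝ M N) + (R ∘ₗ LinearMap.snd ℝ M N))

@[simp] theorem prodUT_apply (P : M →ₗ[ℝ] M) (Q : N →ₗ[ℝ] M) (R : N →ₗ[ℝ] N) (x : M × N) :
    prodUT P Q R x = (P x.1 + Q x.2, R x.2) := rfl

@[simp] theorem prodLT_apply (P : M →ₗ[ℝ] M) (Q : M →ₗ[ℝ] N) (R : N →ₗ[ℝ] N) (x : M × N) :
    prodLT P Q R x = (P x.1, Q x.1 + R x.2) := rfl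

theorem det_prodUT (P : M →ₗ[ℝ] M) (Q : N →ₗ[ℝ] M) (R : N →ₗ[ℝ] N) :
    LinearMap.det (prodUT P Q R) = LinearMap.det P * LinearMap.det R := by
  classical
  set bM := Module.finBasis ℝ M
  set bN := Module.finBasis ℝ N
  have hbb1 : ∀ j, bM.prod bN (Sum.inl j) = (bM j, 0) := fun j =>
    Prod.ext (Module.Basis.prod_apply_inl_fst bM bN j) (Module.Basis.prod_apply_inl_snd bM bN j)
  have hbb2 : ∀ j, bM.prod bN (Sum.inr j) = (0, bN j) := fun j =>
    Prod.ext (Module.Basis.prod_apply_inr_fst bM bN j) (Module.Basis.prod_apply_inr_snd bM bN j)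
  rw [← LinearMap.det_toMatrix (bM.prod bN), ← LinearMap.det_toMatrix bM P, ← LinearMap.det_toMatrix bN R,
    ← Matrix.det_fromBlocks_zero₂₁ (LinearMap.toMatrix bM bM P)
      (LinearMap.toMatrix bN bM Q) (LinearMap.toMatrix bN bN R)]
  congr 1
  ext i j
  rcases i with i | i <;> rcases j with j | j <;>
    simp only [LinearMap.toMatrix_apply, hbb1, hbb2, prodUT_apply, map_zero, add_zero, zero_add,
      Module.Basis.prod_repr_inl, Module.Basis.prod_repr_inr, Matrix.fromBlocks_apply₁₁,
      Matrix.fromBlocks_apply₁₂, Matrix.fromBlocks_apply₂₁, Matrix.fromBlocks_apply₂₂,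
      Matrix.zero_apply, map_zero, Finsupp.coe_zero, Pi.zero_apply]

theorem det_prodLT (P : M →ₗ[ℝ] M) (Q : M →ₗ[ℝ] N) (R : N →ₗ[ℝ] N) :
    LinearMap.det (prodLT P Q R) = LinearMap.det P * LinearMap.det R := by
  classical
  set bM := Module.finBasis ℝ M
  set bN := Module.finBasis ℝ N
  have hbb1 : ∀ j, bM.prod bN (Sum.inl j) = (bM j, 0) := fun j =>
    Prod.ext (Module.Basis.prod_apply_inl_fst bM bN j) (Module.Basis.prod_apply_inl_snd bM bN j)
  have hbb2 : ∀ j, bM.prod bN (Sum.inr j) = (0, bN j) := fun j =>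
    Prod.ext (Module.Basis.prod_apply_inr_fst bM bN j) (Module.Basis.prod_apply_inr_snd bM bN j)
  rw [← LinearMap.det_toMatrix (bM.prod bN), ← LinearMap.det_toMatrix bM P, ← LinearMap.det_toMatrix bN R,
    ← Matrix.det_fromBlocks_zero₁₂ (LinearMap.toMatrix bM bM P)
      (LinearMap.toMatrix bM bN Q) (LinearMap.toMatrix bN bN R)]
  congr 1
  ext i j
  rcases i with i | i <;> rcases j with j | j <;>
    simp only [LinearMap.toMatrix_apply, hbb1, hbb2, prodLT_apply, map_zero, add_zero, zero_add,
      Module.Basis.prod_repr_inl, Module.Basis.prod_repr_inr, Matrix.fromBlocks_apply₁₁,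
      Matrix.fromBlocks_apply₁₂, Matrix.fromBlocks_apply₂₁, Matrix.fromBlocks_apply₂₂,
      Matrix.zero_apply, map_zero, Finsupp.coe_zero, Pi.zero_apply]

end BlockDet

section Tool
variable {G : Type*} [NormedAddCommGroup G] [InnerProductSpace ℝ G] [FiniteDimensional ℝ G]
  (W : Submodule ℝ G)

/-- projection onto `W` as a linear map. -/
def pj : G →ₗ[ℝ] W := (W.orthogonalProjectionOnto).toLinearMap

@[simp] theorem pj_coe_mem (w : W) : pj W (↑w) = w :=
  Submodule.orthogonalProjectionOnto_mem_subspace_eq_self w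

theorem pj_of_mem_orth (x : G) (hx : x ∈ Wᗮ) : pj W x = 0 :=
  Submodule.orthogonalProjectionOnto_apply_of_mem_orthogonal hx

theorem pj_orth_of_mem (x : G) (hx : x ∈ W) : pj Wᗮ x = 0 :=
  Submodule.orthogonalProjectionOnto_orthogonal_apply_eq_zero hx

theorem pj_decomp (x : G) : (↑(pj W x) : G) + (↑(pj Wᗮ x) : G) = x :=
  Submodule.starProjection_add_starProjection_orthogonal (K := W) x

/-- inner product against the projection. -/
theorem inner_pj (x : G) (w : W) : ⟪pj W x, w⟫ = ⟪x, (w : G)⟫ := by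
  conv_rhs => rw [← pj_decomp W x]
  rw [inner_add_left]
  have h2 : ⟪(↑(pj Wᗮ x) : G), (w : G)⟫ = 0 := by
    apply Submodule.inner_left_of_mem_orthogonal (Submodule.coe_mem w)
    exact Submodule.coe_mem _
  rw [Submodule.coe_inner, h2, add_zero]

theorem norm_pj_le (x : G) : ‖(pj W x : W)‖ ≤ ‖x‖ := by
  have h := Submodule.orthogonalProjectionOnto_norm_le W
  calc ‖(pj W x : W)‖ ≤ ‖W.orthogonalProjectionOnto‖ * ‖x‖ :=
        (W.orthogonalProjectionOnto).le_opNorm x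
    _ ≤ 1 * ‖x‖ := mul_le_mul_of_nonneg_right h (norm_nonneg _)
    _ = ‖x‖ := one_mul _

/-- block assembly, upper triangular. -/
def asmUT (P : W →ₗ[ℝ] W) (Q : Wᗮ →ₗ[ℝ] W) (R : Wᗮ →ₗ[ℝ] Wᗮ) : G →ₗ[ℝ] G :=
  W.subtype ∘ₗ P ∘ₗ pj W + W.subtype ∘ₗ Q ∘ₗ pj Wᗮ + Wᗮ.subtype ∘ₗ R ∘ₗ pj Wᗮ

/-- block assembly, lower triangular. -/
def asmLT (P : W →ₗ[ℝ] W) (Q : W →ₗ[ℝ] Wᗮ) (R : Wᗮ →ₗ[ℝ] Wᗮ) : G →ₗ[ℝ] G :=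
  W.subtype ∘ₗ P ∘ₗ pj W + Wᗮ.subtype ∘ₗ Q ∘ₗ pj W + Wᗮ.subtype ∘ₗ R ∘ₗ pj Wᗮ

theorem asmUT_apply (P : W →ₗ[ℝ] W) (Q : Wᗮ →ₗ[ℝ] W) (R : Wᗮ →ₗ[ℝ] Wᗮ) (x : G) :
    asmUT W P Q R x = ↑(P (pj W x)) + ↑(Q (pj Wᗮ x)) + ↑(R (pj Wᗮ x)) := rfl

theorem asmLT_apply (P : W →ₗ[ℝ] W) (Q : W →ₗ[ℝ] Wᗮ) (R : Wᗮ →ₗ[ℝ] Wᗮ) (x : G) :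
    asmLT W P Q R x = ↑(P (pj W x)) + ↑(Q (pj W x)) + ↑(R (pj Wᗮ x)) := rfl

/-- the equivalence with the product. -/
def eWW : (W × Wᗮ) ≃ₗ[ℝ] G :=
  Submodule.prodEquivOfIsCompl W Wᗮ W.isCompl_orthogonal

theorem eWW_apply (p : W × Wᗮ) : eWW W p = (↑p.1 : G) + ↑p.2 := rfl

theorem eWW_symm_apply (x : G) : (eWW W).symm x = (pj W x, pj Wᗮ x) := by
  rw [LinearEquiv.symm_apply_eq, eWW_apply]
  exact (pj_decomp W x).symm

theorem det_asmUT (P : W →ₗ[ℝ] W) (Q : Wᗮ →ₗ[ℝ] W) (R : Wᗮ →ₗ[ℝ] Wᗮ) :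
    LinearMap.det (asmUT W P Q R) = LinearMap.det P * LinearMap.det R := by
  have hfact : asmUT W P Q R =
      (eWW W : W × Wᗮ →ₗ[ℝ] G) ∘ₗ (prodUT P Q R) ∘ₗ ((eWW W).symm : G →ₗ[ℝ] W × Wᗮ) := by
    apply LinearMap.ext; intro x
    simp only [LinearMap.comp_apply, LinearEquiv.coe_coe]
    rw [eWW_symm_apply, prodUT_apply, eWW_apply]
    rw [asmUT_apply]
    push_cast
    abel
  rw [hfact, LinearMap.det_conj, det_prodUT]

theorem det_asmLT (P : W →ₗ[ℝ] W) (Q : W →ₗ[ℝ] Wᗮ) (R : Wᗮ →ₗ[ℝ] Wᗮ) :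
    LinearMap.det (asmLT W P Q R) = LinearMap.det P * LinearMap.det R := by
  have hfact : asmLT W P Q R =
      (eWW W : W × Wᗮ →ₗ[ℝ] G) ∘ₗ (prodLT P Q R) ∘ₗ ((eWW W).symm : G →ₗ[ℝ] W × Wᗮ) := by
    apply LinearMap.ext; intro x
    simp only [LinearMap.comp_apply, LinearEquiv.coe_coe]
    rw [eWW_symm_apply, prodLT_apply, eWW_apply]
    rw [asmLT_apply]
    push_cast
    abel
  rw [hfact, LinearMap.det_conj, det_prodLT]

/-- diagonal assembly. -/
def asmD (P : W →ₗ[ℝ] W) (R : Wᗮ →ₗ[ℝ] Wᗮ) : G →ₗ[ℝ] G := asmUT W P 0 R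

theorem asmD_apply (P : W →ₗ[ℝ] W) (R : Wᗮ →ₗ[ℝ] Wᗮ) (x : G) :
    asmD W P R x = ↑(P (pj W x)) + ↑(R (pj Wᗮ x)) := by
  rw [asmD, asmUT_apply]
  simp

theorem det_asmD (P : W →ₗ[ℝ] W) (R : Wᗮ →ₗ[ℝ] Wᗮ) :
    LinearMap.det (asmD W P R) = LinearMap.det P * LinearMap.det R := det_asmUT W P 0 R

theorem inner_asmD (P : W →ₗ[ℝ] W) (R : Wᗮ →ₗ[ℝ] Wᗮ) (x y : G) :
    ⟪asmD W P R x, y⟫ = ⟪P (pj W x), pj W y⟫ + ⟪R (pj Wᗮ x), pj Wᗮ y⟫ := by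
  rw [asmD_apply]
  conv_lhs => rw [← pj_decomp W y]
  rw [inner_add_left, inner_add_right, inner_add_right]
  have h1 : ⟪(↑(P (pj W x)) : G), (↑(pj Wᗮ y) : G)⟫ = 0 :=
    Submodule.inner_right_of_mem_orthogonal (Submodule.coe_mem _) (Submodule.coe_mem _)
  have h2 : ⟪(↑(R (pj Wᗮ x)) : G), (↑(pj W y) : G)⟫ = 0 := by
    rw [real_inner_comm]
    exact Submodule.inner_right_of_mem_orthogonal (Submodule.coe_mem _) (Submodule.coe_mem _)
  rw [h1, h2, Submodule.coe_inner, Submodule.coe_inner]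
  ring

theorem asmD_posDef {P : W →ₗ[ℝ] W} {R : Wᗮ →ₗ[ℝ] Wᗮ} (hP : PosDef P) (hR : PosDef R) :
    PosDef (asmD W P R) := by
  constructor
  · intro x y
    have h2 : ⟪x, asmD W P R y⟫ = ⟪P (pj W y), pj W x⟫ + ⟪R (pj Wᗮ y), pj Wᗮ x⟫ := by
      rw [real_inner_comm, inner_asmD]
    rw [inner_asmD, h2]
    have e1 : ⟪P (pj W y), pj W x⟫ = ⟪P (pj W x), pj W y⟫ := by
      rw [hP.1 (pj W y) (pj W x), real_inner_comm]
    have e2 : ⟪R (pj Wᗮ y), pj Wᗮ x⟫ = ⟪R (pj Wᗮ x), pj Wᗮ y⟫ := by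
      rw [hR.1 (pj Wᗮ y) (pj Wᗮ x), real_inner_comm]
    rw [e1, e2]
  · intro x hx
    rw [inner_asmD]
    have hnz : pj W x ≠ 0 ∨ pj Wᗮ x ≠ 0 := by
      by_contra h
      push_neg at h
      apply hx
      rw [← pj_decomp W x, h.1, h.2]
      simp
    have hPx : 0 ≤ ⟪P (pj W x), pj W x⟫ := by
      rcases eq_or_ne (pj W x) 0 with h | h
      · rw [h]; simp
      · exact (hP.2 _ h).le
    have hRx : 0 ≤ ⟪R (pj Wᗮ x), pj Wᗮ x⟫ := by
      rcases eq_or_ne (pj Wᗮ x) 0 with h | h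
      · rw [h]; simp
      · exact (hR.2 _ h).le
    rcases hnz with h | h
    · have := hP.2 _ h; linarith
    · have := hR.2 _ h; linarith

/-- compression to `W`. -/
def cmpT (A : G →ₗ[ℝ] G) : W →ₗ[ℝ] W := pj W ∘ₗ A ∘ₗ W.subtype

/-- compression to `Wᗮ`. -/
def cmpQ (A : G →ₗ[ℝ] G) : Wᗮ →ₗ[ℝ] Wᗮ := pj Wᗮ ∘ₗ A ∘ₗ Wᗮ.subtype

/-- off-diagonal block `Wᗮ → W`. -/
def offTQ (A : G →ₗ[ℝ] G) : Wᗮ →ₗ[ℝ] W := pj W ∘ₗ A ∘ₗ Wᗮ.subtype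

/-- off-diagonal block `W → Wᗮ`. -/
def offQT (A : G →ₗ[ℝ] G) : W →ₗ[ℝ] Wᗮ := pj Wᗮ ∘ₗ A ∘ₗ W.subtype

theorem inner_cmpT (A : G →ₗ[ℝ] G) (u v : W) : ⟪cmpT W A u, v⟫ = ⟪A ↑u, (↑v : G)⟫ := by
  rw [cmpT, LinearMap.comp_apply, LinearMap.comp_apply, inner_pj]
  rfl

theorem inner_cmpQ (A : G →ₗ[ℝ] G) (u v : Wᗮ) : ⟪cmpQ W A u, v⟫ = ⟪A ↑u, (↑v : G)⟫ := by
  rw [cmpQ, LinearMap.comp_apply, LinearMap.comp_apply, inner_pj]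
  rfl

theorem cmpT_posDef {A : G →ₗ[ℝ] G} (hA : PosDef A) : PosDef (cmpT W A) := by
  constructor
  · intro u v
    have h2 : ⟪u, cmpT W A v⟫ = ⟪A ↑v, (↑u : G)⟫ := by rw [real_inner_comm, inner_cmpT]
    rw [inner_cmpT, h2, hA.1 (↑u : G) (↑v : G), real_inner_comm]
  · intro u hu
    rw [inner_cmpT]
    refine hA.2 _ ?_
    simpa using fun h => hu (Subtype.ext h)

theorem cmpQ_posDef {A : G →ₗ[ℝ] G} (hA : PosDef A) : PosDef (cmpQ W A) := by
  constructor
  · intro u v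
    have h2 : ⟪u, cmpQ W A v⟫ = ⟪A ↑v, (↑u : G)⟫ := by rw [real_inner_comm, inner_cmpQ]
    rw [inner_cmpQ, h2, hA.1 (↑u : G) (↑v : G), real_inner_comm]
  · intro u hu
    rw [inner_cmpQ]
    refine hA.2 _ ?_
    simpa using fun h => hu (Subtype.ext h)

/-- a positive-definite endomorphism of a f.d. space has a two-sided inverse. -/
theorem PosDef.exists_inverse {H : Type*} [NormedAddCommGroup H] [InnerProductSpace ℝ H]
    [FiniteDimensional ℝ H] {A : H →ₗ[ℝ] H} (hA : PosDef A) :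
    ∃ A' : H →ₗ[ℝ] H, A ∘ₗ A' = LinearMap.id ∧ A' ∘ₗ A = LinearMap.id := by
  have hinj : Function.Injective A := by
    rw [← LinearMap.ker_eq_bot]
    rw [LinearMap.ker_eq_bot']
    intro x hx
    by_contra h
    have := hA.2 x h
    rw [hx] at this
    simp at this
  have hbij : Function.Bijective A :=
    ⟨hinj, (LinearMap.injective_iff_surjective).mp hinj⟩
  let e := LinearEquiv.ofBijective A hbij
  refine ⟨e.symm.toLinearMap, ?_, ?_⟩
  · apply LinearMap.ext; intro x
    exact e.apply_symm_apply x
  · apply LinearMap.ext; intro x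
    exact e.symm_apply_apply x

section Schur
variable {G : Type*} [NormedAddCommGroup G] [InnerProductSpace ℝ G] [FiniteDimensional ℝ G]
  (W : Submodule ℝ G) (V : G →ₗ[ℝ] G) (Ai : ↥W →ₗ[ℝ] ↥W)

/-- the map `K` in the Schur complement construction. -/
def schK : ↥Wᗮ →ₗ[ℝ] ↥W := Ai ∘ₗ offTQ W V

/-- the Schur complement of `V` on `Wᗮ`. -/
def schC : ↥Wᗮ →ₗ[ℝ] ↥Wᗮ := cmpQ W V - (offQT W V) ∘ₗ (schK W V Ai)

theorem inner_offTQ (r : ↥Wᗮ) (w : ↥W) : ⟪offTQ W V r, w⟫ = ⟪V ↑r, (↑w : G)⟫ :=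
  inner_pj W _ w

theorem inner_offQT (w : ↥W) (r : ↥Wᗮ) : ⟪offQT W V w, r⟫ = ⟪V ↑w, (↑r : G)⟫ :=
  inner_pj Wᗮ _ r

variable {W V Ai}

theorem schK_prop (h1 : cmpT W V ∘ₗ Ai = LinearMap.id) (r : ↥Wᗮ) (w : ↥W) :
    ⟪V ↑(schK W V Ai r), (↑w : G)⟫ = ⟪V ↑r, (↑w : G)⟫ := by
  have hc : cmpT W V (schK W V Ai r) = offTQ W V r := by
    have := congrArg (fun f : ↥W →ₗ[ℝ] ↥W => f (offTQ W V r)) h1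
    simpa [schK, LinearMap.comp_apply] using this
  calc ⟪V ↑(schK W V Ai r), (↑w : G)⟫ = ⟪cmpT W V (schK W V Ai r), w⟫ :=
        (inner_cmpT W V _ w).symm
    _ = ⟪offTQ W V r, w⟫ := by rw [hc]
    _ = ⟪V ↑r, (↑w : G)⟫ := inner_offTQ W V r w

theorem inner_schC (h1 : cmpT W V ∘ₗ Ai = LinearMap.id) (r r' : ↥Wᗮ) :
    ⟪schC W V Ai r, r'⟫ = ⟪V ↑r, (↑r' : G)⟫ - ⟪V ↑(schK W V Ai r), (↑r' : G)⟫ := by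
  rw [schC, LinearMap.sub_apply, inner_sub_left, inner_cmpQ, LinearMap.comp_apply,
    inner_offQT]

theorem schur_identity (hsym : V.IsSymmetric) (h1 : cmpT W V ∘ₗ Ai = LinearMap.id) (x : G) :
    ⟪V x, x⟫ =
      ⟪cmpT W V (pj W x + schK W V Ai (pj Wᗮ x)), pj W x + schK W V Ai (pj Wᗮ x)⟫ +
      ⟪schC W V Ai (pj Wᗮ x), pj Wᗮ x⟫ := by
  set s : G := ↑(pj W x) with hs
  set r : G := ↑(pj Wᗮ x) with hr
  set a : G := ↑(schK W V Ai (pj Wᗮ x)) with ha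
  have hx : x = s + r := (pj_decomp W x).symm
  have hRHS1 : ⟪cmpT W V (pj W x + schK W V Ai (pj Wᗮ x)),
      pj W x + schK W V Ai (pj Wᗮ x)⟫ = ⟪V (s + a), s + a⟫ := by
    rw [inner_cmpT]
    push_cast
    rfl
  have hRHS2 : ⟪schC W V Ai (pj Wᗮ x), pj Wᗮ x⟫ = ⟪V r, r⟫ - ⟪V a, r⟫ :=
    inner_schC h1 _ _
  have f1 : ⟪V a, s⟫ = ⟪V r, s⟫ := schK_prop h1 (pj Wᗮ x) (pj W x)
  have f2 : ⟪V a, a⟫ = ⟪V r, a⟫ := schK_prop h1 (pj Wᗮ x) (schK W V Ai (pj Wᗮ x))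
  have sym1 : ⟪V s, r⟫ = ⟪V r, s⟫ := by rw [hsym s r, real_inner_comm]
  have sym2 : ⟪V s, a⟫ = ⟪V a, s⟫ := by rw [hsym s a, real_inner_comm]
  have sym3 : ⟪V r, a⟫ = ⟪V a, r⟫ := by rw [hsym r a, real_inner_comm]
  rw [hRHS1, hRHS2]
  conv_lhs => rw [hx]
  have expand1 : ⟪V (s + r), s + r⟫ = ⟪V s, s⟫ + ⟪V s, r⟫ + ⟪V r, s⟫ + ⟪V r, r⟫ := by
    rw [map_add, inner_add_left, inner_add_right, inner_add_right]; ring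
  have expand2 : ⟪V (s + a), s + a⟫ = ⟪V s, s⟫ + ⟪V s, a⟫ + ⟪V a, s⟫ + ⟪V a, a⟫ := by
    rw [map_add, inner_add_left, inner_add_right, inner_add_right]; ring
  rw [expand1, expand2]
  linarith [f1, f2, sym1, sym2, sym3]

theorem schur_le (hsym : V.IsSymmetric) (h1 : cmpT W V ∘ₗ Ai = LinearMap.id)
    (hcm : ∀ u : ↥W, 0 ≤ ⟪cmpT W V u, u⟫) (x : G) :
    ⟪schC W V Ai (pj Wᗮ x), pj Wᗮ x⟫ ≤ ⟪V x, x⟫ := by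
  rw [schur_identity hsym h1 x]
  linarith [hcm (pj W x + schK W V Ai (pj Wᗮ x))]

theorem schur_eval (hsym : V.IsSymmetric) (h1 : cmpT W V ∘ₗ Ai = LinearMap.id) (r : ↥Wᗮ) :
    ⟪schC W V Ai r, r⟫ =
      ⟪V ((↑r : G) - ↑(schK W V Ai r)), (↑r : G) - ↑(schK W V Ai r)⟫ := by
  set x : G := (↑r : G) - ↑(schK W V Ai r) with hxd
  have hpj : pj W x = -(schK W V Ai r) := by
    rw [hxd, map_sub, pj_of_mem_orth W _ (Submodule.coe_mem r), pj_coe_mem]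
    simp
  have hpj' : pj Wᗮ x = r := by
    rw [hxd, map_sub, pj_coe_mem, pj_orth_of_mem W _ (Submodule.coe_mem (schK W V Ai r))]
    simp
  have := schur_identity hsym h1 x
  rw [hpj, hpj'] at this
  simp only [neg_add_cancel, map_zero, inner_zero_left, zero_add] at this
  exact this.symm

theorem schC_posDef (hV : PosDef V) (h1 : cmpT W V ∘ₗ Ai = LinearMap.id) :
    PosDef (schC W V Ai) := by
  constructor
  · intro r r'
    have key : ∀ u u' : ↥Wᗮ, ⟪V ↑(schK W V Ai u), (↑u' : G)⟫ =
        ⟪V ↑(schK W V Ai u), ↑(schK W V Ai u')⟫ := by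
      intro u u'
      calc ⟪V ↑(schK W V Ai u), (↑u' : G)⟫
          = ⟪(↑(schK W V Ai u) : G), V ↑u'⟫ := hV.1 _ _
        _ = ⟪V ↑u', (↑(schK W V Ai u) : G)⟫ := real_inner_comm _ _
        _ = ⟪V ↑(schK W V Ai u'), (↑(schK W V Ai u) : G)⟫ := (schK_prop h1 u' _).symm
        _ = ⟪(↑(schK W V Ai u') : G), V ↑(schK W V Ai u)⟫ := by
            rw [hV.1 _ _]
        _ = ⟪V ↑(schK W V Ai u), ↑(schK W V Ai u')⟫ := real_inner_comm _ _
    have h2 : ⟪r, schC W V Ai r'⟫ = ⟪V ↑r', (↑r : G)⟫ - ⟪V ↑(schK W V Ai r'), (↑r : G)⟫ := by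
      rw [real_inner_comm, inner_schC h1]
    rw [inner_schC h1, h2, key r r', key r' r]
    have t1 : ⟪V ↑r, (↑r' : G)⟫ = ⟪V ↑r', (↑r : G)⟫ := by
      rw [hV.1 (↑r : G) (↑r' : G), real_inner_comm]
    have t2 : ⟪V ↑(schK W V Ai r), (↑(schK W V Ai r') : G)⟫ =
        ⟪V ↑(schK W V Ai r'), (↑(schK W V Ai r) : G)⟫ := by
      rw [hV.1 _ _, real_inner_comm]
    rw [t1, t2]
  · intro r hr
    rw [schur_eval hV.1 h1 r]
    refine hV.2 _ ?_
    intro h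
    apply hr
    have : pj Wᗮ ((↑r : G) - ↑(schK W V Ai r)) = r := by
      rw [map_sub, pj_coe_mem, pj_orth_of_mem W _ (Submodule.coe_mem (schK W V Ai r))]
      simp
    rw [h, map_zero] at this
    exact this.symm

theorem det_schur (h1 : cmpT W V ∘ₗ Ai = LinearMap.id) :
    LinearMap.det V = LinearMap.det (cmpT W V) * LinearMap.det (schC W V Ai) := by
  have hfact : V = (asmLT W (cmpT W V) (offQT W V) (schC W V Ai)) ∘ₗ
      (asmUT W LinearMap.id (schK W V Ai) LinearMap.id) := by
    apply LinearMap.ext; intro x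
    have hc : cmpT W V (schK W V Ai (pj Wᗮ x)) = offTQ W V (pj Wᗮ x) := by
      have := congrArg (fun f : ↥W →ₗ[ℝ] ↥W => f (offTQ W V (pj Wᗮ x))) h1
      simpa [schK, LinearMap.comp_apply] using this
    rw [LinearMap.comp_apply, asmUT_apply]
    set y : G := ↑((LinearMap.id : ↥W →ₗ[ℝ] ↥W) (pj W x)) + ↑(schK W V Ai (pj Wᗮ x)) +
      ↑((LinearMap.id : ↥Wᗮ →ₗ[ℝ] ↥Wᗮ) (pj Wᗮ x)) with hy
    have hpjy : pj W y = pj W x + schK W V Ai (pj Wᗮ x) := by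
      rw [hy, map_add, map_add, pj_coe_mem, pj_coe_mem,
        pj_of_mem_orth W _ (Submodule.coe_mem _)]
      simp
    have hpjy' : pj Wᗮ y = pj Wᗮ x := by
      rw [hy, map_add, map_add, pj_coe_mem,
        pj_orth_of_mem W _ (Submodule.coe_mem _), pj_orth_of_mem W _ (Submodule.coe_mem _)]
      simp
    rw [asmLT_apply, hpjy, hpjy']
    rw [map_add (cmpT W V), hc, map_add (offQT W V)]
    have dec1 : (↑(cmpT W V (pj W x)) : G) + ↑(offQT W V (pj W x)) = V ↑(pj W x) :=
      pj_decomp W (V ↑(pj W x))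
    have dec2 : (↑(offTQ W V (pj Wᗮ x)) : G) + ↑(cmpQ W V (pj Wᗮ x)) = V ↑(pj Wᗮ x) :=
      pj_decomp W (V ↑(pj Wᗮ x))
    have hsch : (↑(schC W V Ai (pj Wᗮ x)) : G) =
        ↑(cmpQ W V (pj Wᗮ x)) - ↑(offQT W V (schK W V Ai (pj Wᗮ x))) := by
      rw [schC]
      push_cast
      rfl
    rw [hsch]
    push_cast
    have final : V x = V ↑(pj W x) + V ↑(pj Wᗮ x) := by
      conv_lhs => rw [← pj_decomp W x]
      rw [map_add]
    rw [final, ← dec1, ← dec2]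
    push_cast
    abel
  conv_lhs => rw [hfact]
  rw [LinearMap.det_comp, det_asmLT, det_asmUT]
  simp

end Schur

end Tool

section Main
variable {k m : ℕ}
  (E : Fin k → Type*) (F : Fin m → Type*)
  [∀ i, NormedAddCommGroup (E i)] [∀ i, InnerProductSpace ℝ (E i)]
  [∀ i, FiniteDimensional ℝ (E i)]
  [∀ j, NormedAddCommGroup (F j)] [∀ j, InnerProductSpace ℝ (F j)]
  [∀ j, FiniteDimensional ℝ (F j)]
  (c : Fin k → ℝ) (d : Fin m → ℝ)
  (B : ∀ i j, E i →ₗ[ℝ] F j)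

theorem projL_singleL_same (i : Fin k) (v : E i) : projL E i (singleL E i v) = v := by
  simp [projL, singleL, toPi]

theorem projL_singleL_ne {i i' : Fin k} (h : i' ≠ i) (v : E i) :
    projL E i' (singleL E i v) = 0 := by
  simp [projL, singleL, toPi, Pi.single_eq_of_ne h]

theorem Bop_singleL (i : Fin k) (j : Fin m) (v : E i) :
    Bop E F B j (singleL E i v) = B i j v := by
  rw [Bop, LinearMap.sum_apply]
  rw [Finset.sum_eq_single i]
  · rw [LinearMap.comp_apply, projL_singleL_same]
  · intro i' _ h
    rw [LinearMap.comp_apply, projL_singleL_ne E h, map_zero]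
  · intro h; exact absurd (Finset.mem_univ i) h

theorem B_mem_map {T : Submodule ℝ (PiLp 2 E)} (hPF : ProductForm E T)
    (i : Fin k) (j : Fin m) {w : E i} (hw : w ∈ T.map (projL E i)) :
    B i j w ∈ T.map (Bop E F B j) := by
  obtain ⟨t, ht, rfl⟩ := hw
  have hu : singleL E i (projL E i t) ∈ T := hPF t ht i
  exact ⟨singleL E i (projL E i t), hu, Bop_singleL E F B i j (projL E i t)⟩

end Main

section Decomp
variable {k m : ℕ}
  {E : Fin k → Type*} {F : Fin m → Type*}
  [∀ i, NormedAddCommGroup (E i)] [∀ i, InnerProductSpace ℝ (E i)]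
  [∀ i, FiniteDimensional ℝ (E i)]
  [∀ j, NormedAddCommGroup (F j)] [∀ j, InnerProductSpace ℝ (F j)]
  [∀ j, FiniteDimensional ℝ (F j)]
  {c : Fin k → ℝ} {d : Fin m → ℝ}
  {B : ∀ i j, E i →ₗ[ℝ] F j}
  {T : Submodule ℝ (PiLp 2 E)}

theorem pjY_B_memT (hPF : ProductForm E T) (i : Fin k) (j : Fin m)
    (s : ↥(T.map (projL E i))) :
    pj (T.map (Bop E F B j)) (B i j ↑s) =
      ⟨B i j ↑s, B_mem_map E F B hPF i j s.2⟩ := by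
  have := pj_coe_mem (T.map (Bop E F B j)) ⟨B i j ↑s, B_mem_map E F B hPF i j s.2⟩
  simpa using this

theorem pjYo_B_memT (hPF : ProductForm E T) (i : Fin k) (j : Fin m)
    (s : ↥(T.map (projL E i))) :
    pj (T.map (Bop E F B j))ᗮ (B i j ↑s) = 0 :=
  pj_orth_of_mem _ _ (B_mem_map E F B hPF i j s.2)

theorem pjYo_B_memQ
    {BQ : ∀ i j, ↥((T.map (projL E i))ᗮ) →ₗ[ℝ] ↥((T.map (Bop E F B j))ᗮ)}
    (hBQ : ∀ i j (x : ↥((T.map (projL E i))ᗮ)),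
      B i j (x : E i) - (BQ i j x : F j) ∈ T.map (Bop E F B j))
    (i : Fin k) (j : Fin m) (r : ↥((T.map (projL E i))ᗮ)) :
    pj (T.map (Bop E F B j))ᗮ (B i j ↑r) = BQ i j r := by
  have hsplit : B i j ↑r = (B i j ↑r - ↑(BQ i j r)) + ↑(BQ i j r) := by abel
  rw [hsplit, map_add, pj_orth_of_mem _ _ (hBQ i j r), zero_add, pj_coe_mem]

/-- coercion of the restricted sum. -/
theorem coe_sum_BT
    {BT : ∀ i j, ↥(T.map (projL E i)) →ₗ[ℝ] ↥(T.map (Bop E F B j))}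
    (hBT : ∀ i j (x : ↥(T.map (projL E i))), (BT i j x : F j) = B i j (x : E i))
    (j : Fin m) (s : ∀ i, ↥(T.map (projL E i))) :
    ((∑ i, c i • BT i j (s i) : ↥(T.map (Bop E F B j))) : F j) =
      ∑ i, c i • B i j ↑(s i) := by
  push_cast
  refine Finset.sum_congr rfl fun i _ => ?_
  rw [hBT]

/-- decomposition of `∑ cᵢ B xᵢ` along `(B_jT)ᗮ`. -/
theorem pjYo_y
    {BQ : ∀ i j, ↥((T.map (projL E i))ᗮ) →ₗ[ℝ] ↥((T.map (Bop E F B j))ᗮ)}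
    (hBQ : ∀ i j (x : ↥((T.map (projL E i))ᗮ)),
      B i j (x : E i) - (BQ i j x : F j) ∈ T.map (Bop E F B j))
    (hPF : ProductForm E T) (x : ∀ i, E i) (j : Fin m) :
    pj (T.map (Bop E F B j))ᗮ (∑ i, c i • B i j (x i)) =
      ∑ i, c i • BQ i j (pj ((T.map (projL E i))ᗮ) (x i)) := by
  rw [map_sum]
  refine Finset.sum_congr rfl fun i _ => ?_
  rw [_root_.map_smul]
  congr 1
  conv_lhs => rw [← pj_decomp (T.map (projL E i)) (x i)]
  rw [map_add, map_add, pjYo_B_memT hPF i j, pjYo_B_memQ hBQ i j, zero_add]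

/-- decomposition of `∑ cᵢ B xᵢ` along `B_jT`. -/
theorem pjY_y
    {BT : ∀ i j, ↥(T.map (projL E i)) →ₗ[ℝ] ↥(T.map (Bop E F B j))}
    (hBT : ∀ i j (x : ↥(T.map (projL E i))), (BT i j x : F j) = B i j (x : E i))
    (hPF : ProductForm E T) (x : ∀ i, E i) (j : Fin m) :
    pj (T.map (Bop E F B j)) (∑ i, c i • B i j (x i)) =
      (∑ i, c i • BT i j (pj (T.map (projL E i)) (x i))) +
      pj (T.map (Bop E F B j))
        (∑ i, c i • B i j ↑(pj ((T.map (projL E i))ᗮ) (x i))) := by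
  have hx : ∀ i, x i = ↑(pj (T.map (projL E i)) (x i)) +
      ↑(pj ((T.map (projL E i))ᗮ) (x i)) := fun i => (pj_decomp _ (x i)).symm
  conv_lhs => rw [show (∑ i, c i • B i j (x i)) =
    (∑ i, c i • B i j ↑(pj (T.map (projL E i)) (x i))) +
    (∑ i, c i • B i j ↑(pj ((T.map (projL E i))ᗮ) (x i))) by
      rw [← Finset.sum_add_distrib]
      refine Finset.sum_congr rfl fun i _ => ?_
      rw [← smul_add, ← map_add]
      congr 2
      exact hx i]
  rw [map_add]
  congr 1
  rw [map_sum]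
  refine Finset.sum_congr rfl fun i _ => ?_
  rw [_root_.map_smul]
  congr 1
  rw [pjY_B_memT hPF i j]
  apply Subtype.ext
  rw [hBT]

end Decomp

section LEdir
variable {k m : ℕ}
  {E : Fin k → Type*} {F : Fin m → Type*}
  [∀ i, NormedAddCommGroup (E i)] [∀ i, InnerProductSpace ℝ (E i)]
  [∀ i, FiniteDimensional ℝ (E i)]
  [∀ j, NormedAddCommGroup (F j)] [∀ j, InnerProductSpace ℝ (F j)]
  [∀ j, FiniteDimensional ℝ (F j)]
  {c : Fin k → ℝ} {d : Fin m → ℝ}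
  {B : ∀ i j, E i →ₗ[ℝ] F j}
  {T : Submodule ℝ (PiLp 2 E)}

set_option maxHeartbeats 1000000 in
theorem exists_split (hd : ∀ j, 0 < d j) (hPF : ProductForm E T)
    {BT : ∀ i j, ↥(T.map (projL E i)) →ₗ[ℝ] ↥(T.map (Bop E F B j))}
    (hBT : ∀ i j (x : ↥(T.map (projL E i))), (BT i j x : F j) = B i j (x : E i))
    {BQ : ∀ i j, ↥((T.map (projL E i))ᗮ) →ₗ[ℝ] ↥((T.map (Bop E F B j))ᗮ)}
    (hBQ : ∀ i j (x : ↥((T.map (projL E i))ᗮ)),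
      B i j (x : E i) - (BQ i j x : F j) ∈ T.map (Bop E F B j))
    (V : ∀ i, E i →ₗ[ℝ] E i) (U : ∀ j, F j →ₗ[ℝ] F j)
    (hV : ∀ i, PosDef (V i)) (hU : ∀ j, PosDef (U j))
    (hGC : GaussCon E F c d B V U) :
    ∃ (VT : ∀ i, ↥(T.map (projL E i)) →ₗ[ℝ] ↥(T.map (projL E i)))
      (UT : ∀ j, ↥(T.map (Bop E F B j)) →ₗ[ℝ] ↥(T.map (Bop E F B j)))
      (VQ : ∀ i, ↥((T.map (projL E i))ᗮ) →ₗ[ℝ] ↥((T.map (projL E i))ᗮ))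
      (UQ : ∀ j, ↥((T.map (Bop E F B j))ᗮ) →ₗ[ℝ] ↥((T.map (Bop E F B j))ᗮ)),
      (∀ i, PosDef (VT i)) ∧ (∀ j, PosDef (UT j)) ∧
      GaussCon (fun i => ↥(T.map (projL E i))) (fun j => ↥(T.map (Bop E F B j))) c d BT VT UT ∧
      (∀ i, PosDef (VQ i)) ∧ (∀ j, PosDef (UQ j)) ∧
      GaussCon (fun i => ↥((T.map (projL E i))ᗮ)) (fun j => ↥((T.map (Bop E F B j))ᗮ)) c d
        BQ VQ UQ ∧
      gaussObj (fun i => ↥(T.map (projL E i))) (fun j => ↥(T.map (Bop E F B j))) c d VT UT +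
      gaussObj (fun i => ↥((T.map (projL E i))ᗮ)) (fun j => ↥((T.map (Bop E F B j))ᗮ)) c d
        VQ UQ = gaussObj E F c d V U := by
  classical
  have hAinv := fun i => PosDef.exists_inverse (cmpT_posDef (T.map (projL E i)) (hV i))
  have hUinv := fun j => PosDef.exists_inverse (cmpT_posDef (T.map (Bop E F B j)) (hU j))
  refine ⟨fun i => cmpT (T.map (projL E i)) (V i),
    fun j => cmpT (T.map (Bop E F B j)) (U j),
    fun i => schC (T.map (projL E i)) (V i) (hAinv i).choose,
    fun j => schC (T.map (Bop E F B j)) (U j) (hUinv j).choose,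
    fun i => cmpT_posDef _ (hV i), fun j => cmpT_posDef _ (hU j), ?_,
    fun i => schC_posDef (hV i) (hAinv i).choose_spec.1,
    fun j => schC_posDef (hU j) (hUinv j).choose_spec.1, ?_, ?_⟩
  · -- restricted feasibility
    intro s
    have hx := hGC (fun i => (↑(s i) : E i))
    have hL : ∀ j, ⟪cmpT (T.map (Bop E F B j)) (U j) (∑ i, c i • BT i j (s i)),
        ∑ i, c i • BT i j (s i)⟫ =
        ⟪U j (∑ i, c i • B i j ↑(s i)), ∑ i, c i • B i j ↑(s i)⟫ := by
      intro j
      rw [inner_cmpT, coe_sum_BT hBT]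
    have hR : ∀ i, ⟪cmpT (T.map (projL E i)) (V i) (s i), s i⟫ =
        ⟪V i ↑(s i), (↑(s i) : E i)⟫ := fun i => inner_cmpT _ _ _ _
    calc ∑ j, d j * ⟪cmpT (T.map (Bop E F B j)) (U j) (∑ i, c i • BT i j (s i)),
          ∑ i, c i • BT i j (s i)⟫
        = ∑ j, d j * ⟪U j (∑ i, c i • B i j ↑(s i)), ∑ i, c i • B i j ↑(s i)⟫ :=
          Finset.sum_congr rfl fun j _ => by rw [hL j]
      _ ≤ ∑ i, c i * ⟪V i ↑(s i), (↑(s i) : E i)⟫ := hx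
      _ = ∑ i, c i * ⟪cmpT (T.map (projL E i)) (V i) (s i), s i⟫ :=
          Finset.sum_congr rfl fun i _ => by rw [hR i]
  · -- quotient feasibility
    intro r
    set x := fun i => (↑(r i) : E i) -
      ↑(schK (T.map (projL E i)) (V i) (hAinv i).choose (r i)) with hxdef
    have hpjro : ∀ i, pj ((T.map (projL E i))ᗮ) (x i) = r i := by
      intro i
      have hxi : x i = (↑(r i) : E i) -
          ↑(schK (T.map (projL E i)) (V i) (hAinv i).choose (r i)) := rfl
      rw [hxi, map_sub, pj_coe_mem,
        pj_orth_of_mem (T.map (projL E i)) _ (Submodule.coe_mem _), sub_zero]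
    have hyo : ∀ j, pj ((T.map (Bop E F B j))ᗮ) (∑ i, c i • B i j (x i)) =
        ∑ i, c i • BQ i j (r i) := by
      intro j
      rw [pjYo_y hBQ hPF x j]
      exact Finset.sum_congr rfl fun i _ => by rw [hpjro i]
    have hx := hGC x
    calc ∑ j, d j * ⟪schC (T.map (Bop E F B j)) (U j) (hUinv j).choose
          (∑ i, c i • BQ i j (r i)), ∑ i, c i • BQ i j (r i)⟫
        ≤ ∑ j, d j * ⟪U j (∑ i, c i • B i j (x i)), ∑ i, c i • B i j (x i)⟫ := by
          refine Finset.sum_le_sum fun j _ => mul_le_mul_of_nonneg_left ?_ (hd j).le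
          rw [← hyo j]
          exact schur_le (hU j).1 (hUinv j).choose_spec.1
            (fun u => (cmpT_posDef _ (hU j)).posSemidef.2 u) _
      _ ≤ ∑ i, c i * ⟪V i (x i), x i⟫ := hx
      _ = ∑ i, c i * ⟪schC (T.map (projL E i)) (V i) (hAinv i).choose (r i), r i⟫ := by
          refine Finset.sum_congr rfl fun i _ => ?_
          rw [schur_eval (hV i).1 (hAinv i).choose_spec.1 (r i)]
  · -- objective equality
    have hdetU : ∀ j, Real.log (LinearMap.det (U j)) =
        Real.log (LinearMap.det (cmpT (T.map (Bop E F B j)) (U j))) +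
        Real.log (LinearMap.det (schC (T.map (Bop E F B j)) (U j) (hUinv j).choose)) := by
      intro j
      rw [det_schur (hUinv j).choose_spec.1, Real.log_mul
        (PosDef.det_pos_lin (cmpT_posDef _ (hU j))).ne'
        (PosDef.det_pos_lin (schC_posDef (hU j) (hUinv j).choose_spec.1)).ne']
    have hdetV : ∀ i, Real.log (LinearMap.det (V i)) =
        Real.log (LinearMap.det (cmpT (T.map (projL E i)) (V i))) +
        Real.log (LinearMap.det (schC (T.map (projL E i)) (V i) (hAinv i).choose)) := by
      intro i
      rw [det_schur (hAinv i).choose_spec.1, Real.log_mul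
        (PosDef.det_pos_lin (cmpT_posDef _ (hV i))).ne'
        (PosDef.det_pos_lin (schC_posDef (hV i) (hAinv i).choose_spec.1)).ne']
    rw [gaussObj, gaussObj, gaussObj]
    have h1 : ∑ j, d j * Real.log (LinearMap.det (U j)) =
        ∑ j, d j * Real.log (LinearMap.det (cmpT (T.map (Bop E F B j)) (U j))) +
        ∑ j, d j * Real.log (LinearMap.det
          (schC (T.map (Bop E F B j)) (U j) (hUinv j).choose)) := by
      rw [← Finset.sum_add_distrib]
      refine Finset.sum_congr rfl fun j _ => ?_
      rw [hdetU j]; ring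
    have h2 : ∑ i, c i * Real.log (LinearMap.det (V i)) =
        ∑ i, c i * Real.log (LinearMap.det (cmpT (T.map (projL E i)) (V i))) +
        ∑ i, c i * Real.log (LinearMap.det
          (schC (T.map (projL E i)) (V i) (hAinv i).choose)) := by
      rw [← Finset.sum_add_distrib]
      refine Finset.sum_congr rfl fun i _ => ?_
      rw [hdetV i]; ring
    linarith [h1, h2]

theorem Dg_le_add (hd : ∀ j, 0 < d j) (hPF : ProductForm E T)
    {BT : ∀ i j, ↥(T.map (projL E i)) →ₗ[ℝ] ↥(T.map (Bop E F B j))}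
    (hBT : ∀ i j (x : ↥(T.map (projL E i))), (BT i j x : F j) = B i j (x : E i))
    {BQ : ∀ i j, ↥((T.map (projL E i))ᗮ) →ₗ[ℝ] ↥((T.map (Bop E F B j))ᗮ)}
    (hBQ : ∀ i j (x : ↥((T.map (projL E i))ᗮ)),
      B i j (x : E i) - (BQ i j x : F j) ∈ T.map (Bop E F B j)) :
    Dg E F c d B ≤
      Dg (fun i => ↥(T.map (projL E i))) (fun j => ↥(T.map (Bop E F B j))) c d BT +
      Dg (fun i => ↥((T.map (projL E i))ᗮ)) (fun j => ↥((T.map (Bop E F B j))ᗮ)) c d BQ := by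
  refine sSup_le ?_
  rintro x ⟨V, U, hV, hU, hGC, rfl⟩
  obtain ⟨VT, UT, VQ, UQ, hVT, hUT, hGCT, hVQ, hUQ, hGCQ, hobj⟩ :=
    exists_split hd hPF hBT hBQ V U hV hU hGC
  have memT : ((gaussObj (fun i => ↥(T.map (projL E i)))
      (fun j => ↥(T.map (Bop E F B j))) c d VT UT : ℝ) : EReal) ∈
      {x : EReal | ∃ V' U', (∀ i, PosDef (V' i)) ∧ (∀ j, PosDef (U' j)) ∧
        GaussCon (fun i => ↥(T.map (projL E i))) (fun j => ↥(T.map (Bop E F B j))) c d BT V' U' ∧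
        x = (gaussObj (fun i => ↥(T.map (projL E i)))
          (fun j => ↥(T.map (Bop E F B j))) c d V' U' : EReal)} :=
    ⟨VT, UT, hVT, hUT, hGCT, rfl⟩
  have memQ : ((gaussObj (fun i => ↥((T.map (projL E i))ᗮ))
      (fun j => ↥((T.map (Bop E F B j))ᗮ)) c d VQ UQ : ℝ) : EReal) ∈
      {x : EReal | ∃ V' U', (∀ i, PosDef (V' i)) ∧ (∀ j, PosDef (U' j)) ∧
        GaussCon (fun i => ↥((T.map (projL E i))ᗮ))
          (fun j => ↥((T.map (Bop E F B j))ᗮ)) c d BQ V' U' ∧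
        x = (gaussObj (fun i => ↥((T.map (projL E i))ᗮ))
          (fun j => ↥((T.map (Bop E F B j))ᗮ)) c d V' U' : EReal)} :=
    ⟨VQ, UQ, hVQ, hUQ, hGCQ, rfl⟩
  calc ((gaussObj E F c d V U : ℝ) : EReal)
      = ((gaussObj (fun i => ↥(T.map (projL E i)))
          (fun j => ↥(T.map (Bop E F B j))) c d VT UT : ℝ) : EReal) +
        ((gaussObj (fun i => ↥((T.map (projL E i))ᗮ))
          (fun j => ↥((T.map (Bop E F B j))ᗮ)) c d VQ UQ : ℝ) : EReal) := by
        rw [← EReal.coe_add, ← hobj]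
    _ ≤ _ := add_le_add (le_sSup memT) (le_sSup memQ)

end LEdir

section GEdir
variable {k m : ℕ}
  {E : Fin k → Type*} {F : Fin m → Type*}
  [∀ i, NormedAddCommGroup (E i)] [∀ i, InnerProductSpace ℝ (E i)]
  [∀ i, FiniteDimensional ℝ (E i)]
  [∀ j, NormedAddCommGroup (F j)] [∀ j, InnerProductSpace ℝ (F j)]
  [∀ j, FiniteDimensional ℝ (F j)]
  {c : Fin k → ℝ} {d : Fin m → ℝ}
  {B : ∀ i j, E i →ₗ[ℝ] F j}
  {T : Submodule ℝ (PiLp 2 E)}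

theorem PosDef.smul_pd {G : Type*} [NormedAddCommGroup G] [InnerProductSpace ℝ G]
    {P : G →ₗ[ℝ] G} (hP : PosDef P) {a : ℝ} (ha : 0 < a) : PosDef (a • P) := by
  constructor
  · intro x y
    rw [LinearMap.smul_apply, LinearMap.smul_apply, real_inner_smul_left,
      real_inner_smul_right, hP.1 x y]
  · intro x hx
    rw [LinearMap.smul_apply, real_inner_smul_left]
    exact mul_pos ha (hP.2 x hx)

/-- the cross-term domination constant `κ`. -/
theorem exists_kappa (hc : ∀ i, 0 < c i) (hd : ∀ j, 0 < d j)
    (UT : ∀ j, ↥(T.map (Bop E F B j)) →ₗ[ℝ] ↥(T.map (Bop E F B j)))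
    (VQ : ∀ i, ↥((T.map (projL E i))ᗮ) →ₗ[ℝ] ↥((T.map (projL E i))ᗮ))
    (hVQ : ∀ i, PosDef (VQ i)) :
    ∃ κ : ℝ, 0 ≤ κ ∧ ∀ r : (∀ i, ↥((T.map (projL E i))ᗮ)),
      ∑ j, d j * ⟪UT j (pj (T.map (Bop E F B j)) (∑ i, c i • B i j ↑(r i))),
        pj (T.map (Bop E F B j)) (∑ i, c i • B i j ↑(r i))⟫ ≤
      κ * ∑ i, c i * ⟪VQ i (r i), r i⟫ := by
  classical
  choose mu hmu0 hmu using fun j => exists_upper (UT j)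
  choose lam hlam0 hlam using fun i => PosDef.exists_lower (hVQ i)
  set nu : Fin k → Fin m → ℝ :=
    fun i j => ‖LinearMap.toContinuousLinearMap (B i j)‖ with hnu
  set w : Fin k → Fin m → ℝ :=
    fun i j => (c i) ^ 2 * (nu i j) ^ 2 * ((lam i)⁻¹ * (c i)⁻¹) with hw
  have hwnn : ∀ i j, 0 ≤ w i j := by
    intro i j
    have := (hlam0 i).le
    have := (hc i).le
    positivity
  refine ⟨∑ j, d j * (mu j * ((k : ℝ) * ∑ i, w i j)), ?_, ?_⟩
  · refine Finset.sum_nonneg fun j _ => ?_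
    have h1 : 0 ≤ (k : ℝ) * ∑ i, w i j := by
      have : 0 ≤ ∑ i, w i j := Finset.sum_nonneg fun i _ => hwnn i j
      positivity
    exact mul_nonneg (hd j).le (mul_nonneg (hmu0 j) h1)
  · intro r
    set S := ∑ i, c i * ⟪VQ i (r i), r i⟫ with hS
    have hqnn : ∀ i, 0 ≤ c i * ⟪VQ i (r i), r i⟫ := by
      intro i
      rcases eq_or_ne (r i) 0 with h | h
      · rw [h]; simp
      · exact mul_nonneg (hc i).le ((hVQ i).2 _ h).le
    have hSnn : 0 ≤ S := Finset.sum_nonneg fun i _ => hqnn i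
    have hqS : ∀ i, c i * ⟪VQ i (r i), r i⟫ ≤ S :=
      fun i => Finset.single_le_sum (fun i _ => hqnn i) (Finset.mem_univ i)
    have hri : ∀ i, ‖r i‖ ^ 2 ≤ (lam i)⁻¹ * (c i)⁻¹ * S := by
      intro i
      have h1 := hlam i (r i)
      have h2 : ⟪VQ i (r i), r i⟫ ≤ (c i)⁻¹ * S := by
        calc ⟪VQ i (r i), r i⟫ = (c i)⁻¹ * (c i * ⟪VQ i (r i), r i⟫) := by
              rw [inv_mul_cancel_left₀ (hc i).ne']
          _ ≤ (c i)⁻¹ * S := mul_le_mul_of_nonneg_left (hqS i) (inv_nonneg.2 (hc i).le)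
      calc ‖r i‖ ^ 2 ≤ (lam i)⁻¹ * (lam i * ‖r i‖ ^ 2) := by
            rw [inv_mul_cancel_left₀ (hlam0 i).ne']
        _ ≤ (lam i)⁻¹ * ⟪VQ i (r i), r i⟫ :=
            mul_le_mul_of_nonneg_left h1 (inv_nonneg.2 (hlam0 i).le)
        _ ≤ (lam i)⁻¹ * ((c i)⁻¹ * S) :=
            mul_le_mul_of_nonneg_left h2 (inv_nonneg.2 (hlam0 i).le)
        _ = (lam i)⁻¹ * (c i)⁻¹ * S := by ring
    have hstep : ∀ j : Fin m,
        d j * ⟪UT j (pj (T.map (Bop E F B j)) (∑ i, c i • B i j ↑(r i))),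
          pj (T.map (Bop E F B j)) (∑ i, c i • B i j ↑(r i))⟫ ≤
        d j * (mu j * ((k : ℝ) * ∑ i, w i j)) * S := by
      intro j
      have hnorm1 : ‖pj (T.map (Bop E F B j)) (∑ i, c i • B i j ↑(r i))‖ ^ 2 ≤
          (k : ℝ) * ∑ i, (w i j * S) := by
        have ha : ‖pj (T.map (Bop E F B j)) (∑ i, c i • B i j ↑(r i))‖ ≤
            ∑ i, |c i| * (nu i j * ‖r i‖) := by
          calc ‖pj (T.map (Bop E F B j)) (∑ i, c i • B i j ↑(r i))‖ ≤
              ‖∑ i, c i • B i j ↑(r i)‖ := norm_pj_le _ _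
            _ ≤ ∑ i, ‖c i • B i j ↑(r i)‖ := norm_sum_le _ _
            _ ≤ ∑ i, |c i| * (nu i j * ‖r i‖) := by
                refine Finset.sum_le_sum fun i _ => ?_
                rw [norm_smul, Real.norm_eq_abs]
                refine mul_le_mul_of_nonneg_left ?_ (abs_nonneg _)
                have := (LinearMap.toContinuousLinearMap (B i j)).le_opNorm (↑(r i))
                calc ‖B i j ↑(r i)‖ = ‖LinearMap.toContinuousLinearMap (B i j) ↑(r i)‖ := rfl
                  _ ≤ nu i j * ‖(↑(r i) : E i)‖ := this
                  _ = nu i j * ‖r i‖ := by rw [Submodule.coe_norm]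
        have hb : (∑ i, |c i| * (nu i j * ‖r i‖)) ^ 2 ≤
            (k : ℝ) * ∑ i, (|c i| * (nu i j * ‖r i‖)) ^ 2 := by
          have := sq_sum_le_card_mul_sum_sq (s := (Finset.univ : Finset (Fin k)))
            (f := fun i => |c i| * (nu i j * ‖r i‖))
          simpa using this
        have hc2 : ∀ i, (|c i| * (nu i j * ‖r i‖)) ^ 2 ≤ w i j * S := by
          intro i
          have h1 : (|c i| * (nu i j * ‖r i‖)) ^ 2 =
              (c i) ^ 2 * (nu i j) ^ 2 * ‖r i‖ ^ 2 := by
            rw [mul_pow, mul_pow, sq_abs]; ring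
          rw [h1, hw]
          calc (c i) ^ 2 * (nu i j) ^ 2 * ‖r i‖ ^ 2 ≤
              (c i) ^ 2 * (nu i j) ^ 2 * ((lam i)⁻¹ * (c i)⁻¹ * S) := by
                refine mul_le_mul_of_nonneg_left (hri i) ?_
                positivity
            _ = (c i) ^ 2 * (nu i j) ^ 2 * ((lam i)⁻¹ * (c i)⁻¹) * S := by ring
        have hnn : 0 ≤ ∑ i, |c i| * (nu i j * ‖r i‖) := by
          refine Finset.sum_nonneg fun i _ => ?_
          have : 0 ≤ nu i j := norm_nonneg _
          positivity
        calc ‖pj (T.map (Bop E F B j)) (∑ i, c i • B i j ↑(r i))‖ ^ 2 ≤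
            (∑ i, |c i| * (nu i j * ‖r i‖)) ^ 2 := by
              refine pow_le_pow_left₀ (norm_nonneg _) ha 2
          _ ≤ (k : ℝ) * ∑ i, (|c i| * (nu i j * ‖r i‖)) ^ 2 := hb
          _ ≤ (k : ℝ) * ∑ i, (w i j * S) := by
              refine mul_le_mul_of_nonneg_left (Finset.sum_le_sum fun i _ => hc2 i)
                (Nat.cast_nonneg k)
      have h2 : ⟪UT j (pj (T.map (Bop E F B j)) (∑ i, c i • B i j ↑(r i))),
          pj (T.map (Bop E F B j)) (∑ i, c i • B i j ↑(r i))⟫ ≤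
          mu j * ((k : ℝ) * ∑ i, w i j) * S := by
        calc ⟪UT j (pj (T.map (Bop E F B j)) (∑ i, c i • B i j ↑(r i))),
            pj (T.map (Bop E F B j)) (∑ i, c i • B i j ↑(r i))⟫ ≤
            mu j * ‖pj (T.map (Bop E F B j)) (∑ i, c i • B i j ↑(r i))‖ ^ 2 := hmu j _
          _ ≤ mu j * ((k : ℝ) * ∑ i, (w i j * S)) :=
              mul_le_mul_of_nonneg_left hnorm1 (hmu0 j)
          _ = mu j * ((k : ℝ) * ∑ i, w i j) * S := by
              rw [← Finset.sum_mul]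
              ring
      calc d j * ⟪UT j (pj (T.map (Bop E F B j)) (∑ i, c i • B i j ↑(r i))),
          pj (T.map (Bop E F B j)) (∑ i, c i • B i j ↑(r i))⟫ ≤
          d j * (mu j * ((k : ℝ) * ∑ i, w i j) * S) :=
            mul_le_mul_of_nonneg_left h2 (hd j).le
        _ = d j * (mu j * ((k : ℝ) * ∑ i, w i j)) * S := by ring
    calc ∑ j, d j * ⟪UT j (pj (T.map (Bop E F B j)) (∑ i, c i • B i j ↑(r i))),
          pj (T.map (Bop E F B j)) (∑ i, c i • B i j ↑(r i))⟫ ≤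
        ∑ j, d j * (mu j * ((k : ℝ) * ∑ i, w i j)) * S :=
          Finset.sum_le_sum fun j _ => hstep j
      _ = (∑ j, d j * (mu j * ((k : ℝ) * ∑ i, w i j))) * S := by rw [← Finset.sum_mul]

end GEdir

section GEmain
variable {k m : ℕ}
  {E : Fin k → Type*} {F : Fin m → Type*}
  [∀ i, NormedAddCommGroup (E i)] [∀ i, InnerProductSpace ℝ (E i)]
  [∀ i, FiniteDimensional ℝ (E i)]
  [∀ j, NormedAddCommGroup (F j)] [∀ j, InnerProductSpace ℝ (F j)]
  [∀ j, FiniteDimensional ℝ (F j)]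
  {c : Fin k → ℝ} {d : Fin m → ℝ}
  {B : ∀ i j, E i →ₗ[ℝ] F j}
  {T : Submodule ℝ (PiLp 2 E)}

set_option maxHeartbeats 1600000 in
theorem exists_merge (hc : ∀ i, 0 < c i) (hd : ∀ j, 0 < d j) (hPF : ProductForm E T)
    {BT : ∀ i j, ↥(T.map (projL E i)) →ₗ[ℝ] ↥(T.map (Bop E F B j))}
    (hBT : ∀ i j (x : ↥(T.map (projL E i))), (BT i j x : F j) = B i j (x : E i))
    {BQ : ∀ i j, ↥((T.map (projL E i))ᗮ) →ₗ[ℝ] ↥((T.map (Bop E F B j))ᗮ)}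
    (hBQ : ∀ i j (x : ↥((T.map (projL E i))ᗮ)),
      B i j (x : E i) - (BQ i j x : F j) ∈ T.map (Bop E F B j))
    (hcrit : ∑ i, c i * (Module.finrank ℝ (T.map (projL E i)) : ℝ) =
      ∑ j, d j * (Module.finrank ℝ (T.map (Bop E F B j)) : ℝ))
    (VT : ∀ i, ↥(T.map (projL E i)) →ₗ[ℝ] ↥(T.map (projL E i)))
    (UT : ∀ j, ↥(T.map (Bop E F B j)) →ₗ[ℝ] ↥(T.map (Bop E F B j)))
    (hVT : ∀ i, PosDef (VT i)) (hUT : ∀ j, PosDef (UT j))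
    (hGCT : GaussCon (fun i => ↥(T.map (projL E i))) (fun j => ↥(T.map (Bop E F B j)))
      c d BT VT UT)
    (VQ : ∀ i, ↥((T.map (projL E i))ᗮ) →ₗ[ℝ] ↥((T.map (projL E i))ᗮ))
    (UQ : ∀ j, ↥((T.map (Bop E F B j))ᗮ) →ₗ[ℝ] ↥((T.map (Bop E F B j))ᗮ))
    (hVQ : ∀ i, PosDef (VQ i)) (hUQ : ∀ j, PosDef (UQ j))
    (hGCQ : GaussCon (fun i => ↥((T.map (projL E i))ᗮ))
      (fun j => ↥((T.map (Bop E F B j))ᗮ)) c d BQ VQ UQ)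
    {η : ℝ} (hη : 0 < η) :
    ∃ (V : ∀ i, E i →ₗ[ℝ] E i) (U : ∀ j, F j →ₗ[ℝ] F j),
      (∀ i, PosDef (V i)) ∧ (∀ j, PosDef (U j)) ∧ GaussCon E F c d B V U ∧
      gaussObj (fun i => ↥(T.map (projL E i))) (fun j => ↥(T.map (Bop E F B j))) c d VT UT +
      gaussObj (fun i => ↥((T.map (projL E i))ᗮ)) (fun j => ↥((T.map (Bop E F B j))ᗮ)) c d
        VQ UQ - η ≤ gaussObj E F c d V U := by
  classical
  obtain ⟨κ, hκ0, hκ⟩ := exists_kappa hc hd UT VQ hVQ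
  set N : ℝ := ∑ i, c i * (Module.finrank ℝ (T.map (projL E i)) : ℝ) with hNdef
  set Cd : ℝ := ∑ i, c i * (Module.finrank ℝ ((T.map (projL E i))ᗮ) : ℝ) with hCddef
  have hN0 : 0 ≤ N := Finset.sum_nonneg fun i _ =>
    mul_nonneg (hc i).le (Nat.cast_nonneg _)
  have hCd0 : 0 ≤ Cd := Finset.sum_nonneg fun i _ =>
    mul_nonneg (hc i).le (Nat.cast_nonneg _)
  set δ : ℝ := Real.exp (η / (N + 1)) - 1 with hδdef
  have hηN : 0 < η / (N + 1) := div_pos hη (by linarith)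
  have hδ0 : 0 < δ := by
    have := Real.add_one_le_exp (η / (N + 1))
    have h2 : (1 : ℝ) < Real.exp (η / (N + 1)) := by nlinarith [hηN]
    simp only [hδdef]
    linarith
  have hlog1δ : Real.log (1 + δ) = η / (N + 1) := by
    rw [hδdef]
    have : (1 : ℝ) + (Real.exp (η / (N + 1)) - 1) = Real.exp (η / (N + 1)) := by ring
    rw [this, Real.log_exp]
  set X : ℝ := Cd * (1 + δ⁻¹) * κ with hXdef
  have hX0 : 0 ≤ X := by
    have h1 : 0 ≤ 1 + δ⁻¹ := by positivity
    positivity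
  set ε : ℝ := min 1 (η / (X + 1)) with hεdef
  have hε0 : 0 < ε := lt_min one_pos (div_pos hη (by linarith))
  have hε1 : ε ≤ η / (X + 1) := min_le_right _ _
  set a : ℝ := ε * (1 + δ) with hadef
  have ha0 : 0 < a := by positivity
  set bb : ℝ := 1 + ε * (1 + δ⁻¹) * κ with hbbdef
  have hbbaux : 0 ≤ ε * (1 + δ⁻¹) * κ := by positivity
  have hbb1 : 1 ≤ bb := by simp only [hbbdef]; linarith
  have hbb0 : 0 < bb := lt_of_lt_of_le one_pos hbb1
  refine ⟨fun i => asmD (T.map (projL E i)) (a • VT i) (bb • VQ i),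
    fun j => asmD (T.map (Bop E F B j)) (ε • UT j) (UQ j),
    fun i => asmD_posDef _ ((hVT i).smul_pd ha0) ((hVQ i).smul_pd hbb0),
    fun j => asmD_posDef _ ((hUT j).smul_pd hε0) (hUQ j), ?_, ?_⟩
  · -- Gauss constraint
    intro x
    set s : ∀ i, ↥(T.map (projL E i)) := fun i => pj (T.map (projL E i)) (x i) with hsdef
    set r : ∀ i, ↥((T.map (projL E i))ᗮ) := fun i => pj ((T.map (projL E i))ᗮ) (x i)
      with hrdef
    set tt : ∀ j, ↥(T.map (Bop E F B j)) := fun j => ∑ i, c i • BT i j (s i) with httdef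
    set ρ : ∀ j, ↥(T.map (Bop E F B j)) :=
      fun j => pj (T.map (Bop E F B j)) (∑ i, c i • B i j ↑(r i)) with hρdef
    set wq : ∀ j, ↥((T.map (Bop E F B j))ᗮ) := fun j => ∑ i, c i • BQ i j (r i) with hwqdef
    have hsplitj : ∀ j, ⟪asmD (T.map (Bop E F B j)) (ε • UT j) (UQ j)
        (∑ i, c i • B i j (x i)), ∑ i, c i • B i j (x i)⟫ =
        ε * ⟪UT j (tt j + ρ j), tt j + ρ j⟫ + ⟪UQ j (wq j), wq j⟫ := by
      intro j
      rw [inner_asmD]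
      rw [pjY_y hBT hPF x j, pjYo_y hBQ hPF x j]
      rw [LinearMap.smul_apply, real_inner_smul_left]
    have habsorb : ∀ j, ⟪UT j (tt j + ρ j), tt j + ρ j⟫ ≤
        (1 + δ) * ⟪UT j (tt j), tt j⟫ + (1 + δ⁻¹) * ⟪UT j (ρ j), ρ j⟫ :=
      fun j => (hUT j).posSemidef.absorb hδ0 (tt j) (ρ j)
    have hT1 : ∑ j, d j * ⟪UT j (tt j), tt j⟫ ≤ ∑ i, c i * ⟪VT i (s i), s i⟫ := hGCT s
    have hT2 : ∑ j, d j * ⟪UT j (ρ j), ρ j⟫ ≤ κ * ∑ i, c i * ⟪VQ i (r i), r i⟫ := hκ r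
    have hT3 : ∑ j, d j * ⟪UQ j (wq j), wq j⟫ ≤ ∑ i, c i * ⟪VQ i (r i), r i⟫ := hGCQ r
    set Xs : ℝ := ∑ i, c i * ⟪VT i (s i), s i⟫ with hXs
    set Ys : ℝ := ∑ i, c i * ⟪VQ i (r i), r i⟫ with hYs
    have hLHS : ∑ j, d j * ⟪asmD (T.map (Bop E F B j)) (ε • UT j) (UQ j)
        (∑ i, c i • B i j (x i)), ∑ i, c i • B i j (x i)⟫ ≤
        ε * (1 + δ) * Xs + ε * (1 + δ⁻¹) * (κ * Ys) + Ys := by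
      calc ∑ j, d j * ⟪asmD (T.map (Bop E F B j)) (ε • UT j) (UQ j)
            (∑ i, c i • B i j (x i)), ∑ i, c i • B i j (x i)⟫
          = ∑ j, (d j * ε * ⟪UT j (tt j + ρ j), tt j + ρ j⟫ +
              d j * ⟪UQ j (wq j), wq j⟫) := by
            refine Finset.sum_congr rfl fun j _ => ?_
            rw [hsplitj j]; ring
        _ ≤ ∑ j, ((ε * (1 + δ)) * (d j * ⟪UT j (tt j), tt j⟫) +
              (ε * (1 + δ⁻¹)) * (d j * ⟪UT j (ρ j), ρ j⟫) +
              d j * ⟪UQ j (wq j), wq j⟫) := by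
            refine Finset.sum_le_sum fun j _ => ?_
            have h1 : d j * ε * ⟪UT j (tt j + ρ j), tt j + ρ j⟫ ≤
                d j * ε * ((1 + δ) * ⟪UT j (tt j), tt j⟫ +
                  (1 + δ⁻¹) * ⟪UT j (ρ j), ρ j⟫) :=
              mul_le_mul_of_nonneg_left (habsorb j)
                (mul_nonneg (hd j).le hε0.le)
            nlinarith [h1]
        _ = (ε * (1 + δ)) * (∑ j, d j * ⟪UT j (tt j), tt j⟫) +
            (ε * (1 + δ⁻¹)) * (∑ j, d j * ⟪UT j (ρ j), ρ j⟫) +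
            (∑ j, d j * ⟪UQ j (wq j), wq j⟫) := by
            rw [Finset.sum_add_distrib, Finset.sum_add_distrib, ← Finset.mul_sum,
              ← Finset.mul_sum]
        _ ≤ ε * (1 + δ) * Xs + ε * (1 + δ⁻¹) * (κ * Ys) + Ys := by
            have k1 : 0 ≤ ε * (1 + δ) := by positivity
            have k2 : 0 ≤ ε * (1 + δ⁻¹) := by positivity
            have b1 := mul_le_mul_of_nonneg_left hT1 k1
            have b2 := mul_le_mul_of_nonneg_left hT2 k2
            exact add_le_add (add_le_add b1 b2) hT3
    have hRHS : ∑ i, c i * ⟪asmD (T.map (projL E i)) (a • VT i) (bb • VQ i) (x i), x i⟫ =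
        a * Xs + bb * Ys := by
      calc ∑ i, c i * ⟪asmD (T.map (projL E i)) (a • VT i) (bb • VQ i) (x i), x i⟫
          = ∑ i, (a * (c i * ⟪VT i (s i), s i⟫) + bb * (c i * ⟪VQ i (r i), r i⟫)) := by
            refine Finset.sum_congr rfl fun i _ => ?_
            rw [inner_asmD, LinearMap.smul_apply, LinearMap.smul_apply,
              real_inner_smul_left, real_inner_smul_left]
            ring
        _ = a * Xs + bb * Ys := by
            rw [Finset.sum_add_distrib, ← Finset.mul_sum, ← Finset.mul_sum]
    rw [hRHS]
    have hfin : ε * (1 + δ) * Xs + ε * (1 + δ⁻¹) * (κ * Ys) + Ys = a * Xs + bb * Ys := by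
      rw [hadef, hbbdef]; ring
    exact le_trans hLHS hfin.le
  · -- objective bound
    have hlogU : ∀ j, Real.log (LinearMap.det
        (asmD (T.map (Bop E F B j)) (ε • UT j) (UQ j))) =
        (Module.finrank ℝ (T.map (Bop E F B j)) : ℝ) * Real.log ε +
        Real.log (LinearMap.det (UT j)) + Real.log (LinearMap.det (UQ j)) := by
      intro j
      rw [det_asmD, LinearMap.det_smul]
      have p1 : (0:ℝ) < ε ^ Module.finrank ℝ ↥(T.map (Bop E F B j)) := by positivity
      have p2 := PosDef.det_pos_lin (hUT j)
      have p3 := PosDef.det_pos_lin (hUQ j)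
      rw [Real.log_mul (mul_pos p1 p2).ne' p3.ne', Real.log_mul p1.ne' p2.ne',
        Real.log_pow]
    have hlogV : ∀ i, Real.log (LinearMap.det
        (asmD (T.map (projL E i)) (a • VT i) (bb • VQ i))) =
        (Module.finrank ℝ (T.map (projL E i)) : ℝ) * Real.log a +
        Real.log (LinearMap.det (VT i)) +
        ((Module.finrank ℝ ((T.map (projL E i))ᗮ) : ℝ) * Real.log bb +
        Real.log (LinearMap.det (VQ i))) := by
      intro i
      rw [det_asmD, LinearMap.det_smul, LinearMap.det_smul]
      have p1 : (0:ℝ) < a ^ Module.finrank ℝ ↥(T.map (projL E i)) := by positivity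
      have p2 := PosDef.det_pos_lin (hVT i)
      have p3 : (0:ℝ) < bb ^ Module.finrank ℝ ↥((T.map (projL E i))ᗮ) := by positivity
      have p4 := PosDef.det_pos_lin (hVQ i)
      rw [Real.log_mul (mul_pos p1 p2).ne' (mul_pos p3 p4).ne',
        Real.log_mul p1.ne' p2.ne', Real.log_mul p3.ne' p4.ne', Real.log_pow,
        Real.log_pow]
    have h1 : ∑ j, d j * Real.log (LinearMap.det
        (asmD (T.map (Bop E F B j)) (ε • UT j) (UQ j))) =
        (∑ j, d j * (Module.finrank ℝ (T.map (Bop E F B j)) : ℝ)) * Real.log ε +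
        ∑ j, d j * Real.log (LinearMap.det (UT j)) +
        ∑ j, d j * Real.log (LinearMap.det (UQ j)) := by
      rw [Finset.sum_mul]
      rw [← Finset.sum_add_distrib, ← Finset.sum_add_distrib]
      refine Finset.sum_congr rfl fun j _ => ?_
      rw [hlogU j]; ring
    have h2 : ∑ i, c i * Real.log (LinearMap.det
        (asmD (T.map (projL E i)) (a • VT i) (bb • VQ i))) =
        N * Real.log a +
        ∑ i, c i * Real.log (LinearMap.det (VT i)) +
        (Cd * Real.log bb +
        ∑ i, c i * Real.log (LinearMap.det (VQ i))) := by
      rw [hNdef, hCddef, Finset.sum_mul, Finset.sum_mul]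
      rw [← Finset.sum_add_distrib, ← Finset.sum_add_distrib, ← Finset.sum_add_distrib]
      refine Finset.sum_congr rfl fun i _ => ?_
      rw [hlogV i]; ring
    have hloga : Real.log a = Real.log ε + Real.log (1 + δ) := by
      rw [hadef, Real.log_mul hε0.ne' (by linarith : (1:ℝ) + δ ≠ 0)]
    have hNcrit : (∑ j, d j * (Module.finrank ℝ (T.map (Bop E F B j)) : ℝ)) = N := by
      rw [hNdef]; exact hcrit.symm
    have hpen1 : N * Real.log (1 + δ) ≤ η := by
      rw [hlog1δ]
      have hq : N / (N + 1) ≤ 1 := by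
        rw [div_le_one (by linarith : (0:ℝ) < N + 1)]
        linarith
      calc N * (η / (N + 1)) = η * (N / (N + 1)) := by ring
        _ ≤ η * 1 := mul_le_mul_of_nonneg_left hq hη.le
        _ = η := mul_one η
    have hpen2 : Cd * Real.log bb ≤ η := by
      have hlb : Real.log bb ≤ ε * (1 + δ⁻¹) * κ := by
        have := Real.log_le_sub_one_of_pos hbb0
        rw [hbbdef] at this ⊢
        linarith
      have step1 : Cd * Real.log bb ≤ Cd * (ε * (1 + δ⁻¹) * κ) :=
        mul_le_mul_of_nonneg_left hlb hCd0
      have step2 : Cd * (ε * (1 + δ⁻¹) * κ) = ε * X := by rw [hXdef]; ring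
      have step3 : ε * X ≤ (η / (X + 1)) * X :=
        mul_le_mul_of_nonneg_right hε1 hX0
      have step4 : (η / (X + 1)) * X ≤ η := by
        have hq : X / (X + 1) ≤ 1 := by
          rw [div_le_one (by linarith : (0:ℝ) < X + 1)]
          linarith
        calc (η / (X + 1)) * X = η * (X / (X + 1)) := by ring
          _ ≤ η * 1 := mul_le_mul_of_nonneg_left hq hη.le
          _ = η := mul_one η
      linarith
    rw [gaussObj, gaussObj, gaussObj, h1, h2, hNcrit, hloga]
    have hlogbb0 : 0 ≤ Real.log bb := Real.log_nonneg hbb1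
    linarith [hpen1, hpen2]

end GEmain

section Final
variable {k m : ℕ}
  {E : Fin k → Type*} {F : Fin m → Type*}
  [∀ i, NormedAddCommGroup (E i)] [∀ i, InnerProductSpace ℝ (E i)]
  [∀ i, FiniteDimensional ℝ (E i)]
  [∀ j, NormedAddCommGroup (F j)] [∀ j, InnerProductSpace ℝ (F j)]
  [∀ j, FiniteDimensional ℝ (F j)]
  {c : Fin k → ℝ} {d : Fin m → ℝ}
  {B : ∀ i j, E i →ₗ[ℝ] F j}
  {T : Submodule ℝ (PiLp 2 E)}

theorem Dg_ge_add (hc : ∀ i, 0 < c i) (hd : ∀ j, 0 < d j) (hPF : ProductForm E T)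
    {BT : ∀ i j, ↥(T.map (projL E i)) →ₗ[ℝ] ↥(T.map (Bop E F B j))}
    (hBT : ∀ i j (x : ↥(T.map (projL E i))), (BT i j x : F j) = B i j (x : E i))
    {BQ : ∀ i j, ↥((T.map (projL E i))ᗮ) →ₗ[ℝ] ↥((T.map (Bop E F B j))ᗮ)}
    (hBQ : ∀ i j (x : ↥((T.map (projL E i))ᗮ)),
      B i j (x : E i) - (BQ i j x : F j) ∈ T.map (Bop E F B j))
    (hcrit : ∑ i, c i * (Module.finrank ℝ (T.map (projL E i)) : ℝ) =
      ∑ j, d j * (Module.finrank ℝ (T.map (Bop E F B j)) : ℝ)) :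
    Dg (fun i => ↥(T.map (projL E i))) (fun j => ↥(T.map (Bop E F B j))) c d BT +
    Dg (fun i => ↥((T.map (projL E i))ᗮ)) (fun j => ↥((T.map (Bop E F B j))ᗮ)) c d BQ ≤
    Dg E F c d B := by
  refine EReal.add_le_of_forall_lt ?_
  intro a' ha' b' hb'
  obtain ⟨xa, hxa_mem, hxa⟩ := lt_sSup_iff.mp ha'
  obtain ⟨xb, hxb_mem, hxb⟩ := lt_sSup_iff.mp hb'
  obtain ⟨VT, UT, hVT, hUT, hGCT, rfl⟩ := hxa_mem
  obtain ⟨VQ, UQ, hVQ, hUQ, hGCQ, rfl⟩ := hxb_mem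
  set aT : ℝ := gaussObj (fun i => ↥(T.map (projL E i)))
    (fun j => ↥(T.map (Bop E F B j))) c d VT UT with haT
  set bQ : ℝ := gaussObj (fun i => ↥((T.map (projL E i))ᗮ))
    (fun j => ↥((T.map (Bop E F B j))ᗮ)) c d VQ UQ with hbQ
  have key : ∀ η : ℝ, 0 < η → ((aT + bQ - η : ℝ) : EReal) ≤ Dg E F c d B := by
    intro η hη
    obtain ⟨V, U, hV, hU, hGC, hobj⟩ := exists_merge hc hd hPF hBT hBQ hcrit
      VT UT hVT hUT hGCT VQ UQ hVQ hUQ hGCQ hη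
    have hmem : ((gaussObj E F c d V U : ℝ) : EReal) ∈
        {x : EReal | ∃ V' U', (∀ i, PosDef (V' i)) ∧ (∀ j, PosDef (U' j)) ∧
          GaussCon E F c d B V' U' ∧ x = (gaussObj E F c d V' U' : EReal)} :=
      ⟨V, U, hV, hU, hGC, rfl⟩
    calc ((aT + bQ - η : ℝ) : EReal) ≤ ((gaussObj E F c d V U : ℝ) : EReal) :=
          EReal.coe_le_coe_iff.mpr hobj
      _ ≤ Dg E F c d B := le_sSup hmem
  have h2 : a' + b' < ((aT + bQ : ℝ) : EReal) := by
    rw [EReal.coe_add]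
    exact EReal.add_lt_add hxa hxb
  obtain ⟨z, hz1, hz2⟩ := EReal.lt_iff_exists_real_btwn.mp h2
  have hzr : z < aT + bQ := EReal.coe_lt_coe_iff.mp hz2
  have hη : 0 < aT + bQ - z := by linarith
  have : ((z : ℝ) : EReal) ≤ Dg E F c d B := by
    have := key (aT + bQ - z) hη
    have hz3 : aT + bQ - (aT + bQ - z) = z := by ring
    rwa [hz3] at this
  exact le_trans hz1.le this

theorem Dg_eq_add (hc : ∀ i, 0 < c i) (hd : ∀ j, 0 < d j)
    (hT : IsCritical E F c d B T)
    {BT : ∀ i j, ↥(T.map (projL E i)) →ₗ[ℝ] ↥(T.map (Bop E F B j))}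
    (hBT : ∀ i j (x : ↥(T.map (projL E i))), (BT i j x : F j) = B i j (x : E i))
    {BQ : ∀ i j, ↥((T.map (projL E i))ᗮ) →ₗ[ℝ] ↥((T.map (Bop E F B j))ᗮ)}
    (hBQ : ∀ i j (x : ↥((T.map (projL E i))ᗮ)),
      B i j (x : E i) - (BQ i j x : F j) ∈ T.map (Bop E F B j)) :
    Dg E F c d B =
      Dg (fun i => ↥(T.map (projL E i))) (fun j => ↥(T.map (Bop E F B j))) c d BT +
      Dg (fun i => ↥((T.map (projL E i))ᗮ)) (fun j => ↥((T.map (Bop E F B j))ᗮ)) c d BQ :=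
  le_antisymm (Dg_le_add hd hT.2.2.1 hBT hBQ)
    (Dg_ge_add hc hd hT.2.2.1 hBT hBQ hT.2.2.2)

end Final

end FRBL

namespace FRBL

variable {k m : ℕ}
  (E : Fin k → Type*) (F : Fin m → Type*)
  [∀ i, NormedAddCommGroup (E i)] [∀ i, InnerProductSpace ℝ (E i)]
  [∀ i, FiniteDimensional ℝ (E i)]
  [∀ i, MeasurableSpace (E i)] [∀ i, BorelSpace (E i)]
  [∀ j, NormedAddCommGroup (F j)] [∀ j, InnerProductSpace ℝ (F j)]
  [∀ j, FiniteDimensional ℝ (F j)]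
  [∀ j, MeasurableSpace (F j)] [∀ j, BorelSpace (F j)]

/-- **Lemma (decomposability at critical subspaces, gaussian constant).** If `T` is a
critical subspace for `(c,d,B)`, then `D_g(c,d,B) = D_g(c,d,B_T) + D_g(c,d,B_{E₀/T})`. -/
theorem Dg_decompose_critical
    (c : Fin k → ℝ) (d : Fin m → ℝ) (B : ∀ i j, E i →ₗ[ℝ] F j)
    (hc : ∀ i, 0 < c i) (hd : ∀ j, 0 < d j)
    (T : Submodule ℝ (PiLp 2 E)) (hT : IsCritical E F c d B T)
    (BT : ∀ i j, ↥(T.map (projL E i)) →ₗ[ℝ] ↥(T.map (Bop E F B j)))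
    (hBT : ∀ i j (x : ↥(T.map (projL E i))), (BT i j x : F j) = B i j (x : E i))
    (BQ : ∀ i j, ↥((T.map (projL E i))ᗮ) →ₗ[ℝ] ↥((T.map (Bop E F B j))ᗮ))
    (hBQ : ∀ i j (x : ↥((T.map (projL E i))ᗮ)),
      B i j (x : E i) - (BQ i j x : F j) ∈ T.map (Bop E F B j)) :
    Dg E F c d B =
      Dg (fun i => ↥(T.map (projL E i))) (fun j => ↥(T.map (Bop E F B j))) c d BT +
      Dg (fun i => ↥((T.map (projL E i))ᗮ)) (fun j => ↥((T.map (Bop E F B j))ᗮ)) c d BQ :=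
  Dg_eq_add hc hd hT hBT hBQ

end FRBL
end
end

section
/- (Basis selection lemma.) Let N := dim(E_0) and suppose the datum (c,d,B) satisfies the scaling condition and Σ_{j=1}^m d_j dim(B_j T) ≥ Σ_{i=1}^k c_i dim(π_{E_i}T) for all product-form subspaces T ⊆ E_0 (in particular each B_j is surjective). Then there exists a real number c > 0 such that for every orthonormal basis (e_n)_{1≤n≤N} of E_0 with the property that each e_n lies in some E_i, there exist sets I_j ⊆ {1,…,N} with |I_j| = dim(E^j) for each 1≤j≤m such that, with S_i := {n : e_n ∈ E_i}: (a) Σ_{j=1}^m d_j |I_j ∩ {n+1,…,N}| ≥ Σ_{i=1}^k c_i |S_i ∩ {n+1,…,N}| for all 0 ≤ n ≤ N, and (b) ‖⋀_{n∈I_j} B_j e_n‖ ≥ c for all 1≤j≤m, the norm being that of the top exterior power of E^j. Moreover, if the datum has no critical subspace, then there is δ > 0 depending only on (c,d,B) such that (a) improves to Σ_{j=1}^m d_j |I_j ∩ {n+1,…,N}| ≥ Σ_{i=1}^k c_i |S_i ∩ {n+1,…,N}| + δ for all 0 < n < N. -/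
open MeasureTheory LinearMap
open scoped RealInnerProductSpace BigOperators NNReal ENNReal

noncomputable section

/-!
For each `j`, take for `I_j` the pivots of the family `n ↦ B_j e_n`: the indices `n` for which
`B_j e_n` is not in the span of the later vectors `B_j e_{n'}`, `n' > n`. The selected vectors are
independent and span the same tails as the whole family, so for the flag
`T_n = span {e_{n'} | n' ≥ n}` the right-hand side of (a) is `∑ d_j dim B_j T_n`, while the
left-hand side is `∑ c_i dim π_{E_i} T_n`. Since every `e_n` lies in some `E_i`, `T_n` is of
product form, so (a) is the dimension condition for `T_n`; in the simple case `T_n` is not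
critical for `0 < n < N`, and the defect is at least the least positive value of
`∑ d_j r_j - ∑ c_i s_i` over the finitely many admissible dimension vectors `(s, r)`.
For (b), the Gram determinants of the selected vectors are positive, and compactness of the set
of orthonormal bases adapted to a fixed `ι` makes the bound uniform, since only finitely many
choices of `(I_j)` and of `ι` exist.
-/

section Pivots

open Submodule Finset

theorem LinearIndepOn.finrank_span_image {K ι G : Type*} [Field K] [AddCommGroup G] [Module K G]
    {u : ι → G} {s : Finset ι} (hu : LinearIndepOn K u s) :
    Module.finrank K (span K (u '' s)) = #s := by
  rw [Set.image_eq_range, finrank_span_eq_card hu]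
  simp

theorem LinearIndepOn.finrank_span_image_eq_card_filter {K ι G : Type*} [Field K]
    [AddCommGroup G] [Module K G] {u : ι → G} {s : Finset ι} (hu : LinearIndepOn K u s)
    (hzero : ∀ a ∉ s, u a = 0) (p : ι → Prop) [DecidablePred p] :
    Module.finrank K (span K (u '' {a | p a})) = #(s.filter p) := by
  have hspan : span K (u '' {a | p a}) = span K (u '' (s.filter p : Set ι)) := by
    refine le_antisymm (span_le.2 ?_) (span_mono (Set.image_mono fun a ha => (mem_filter.1 ha).2))
    rintro _ ⟨a, ha, rfl⟩
    by_cases has : a ∈ s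
    · exact subset_span ⟨a, mem_filter.2 ⟨has, ha⟩, rfl⟩
    · rw [SetLike.mem_coe, hzero a has]
      exact zero_mem _
  rw [hspan, (hu.mono (coe_subset.2 (filter_subset _ _))).finrank_span_image]

variable {K ι G : Type*} [Field K] [LinearOrder ι] [Fintype ι] [AddCommGroup G] [Module K G]

variable (K) in
open Classical in
def pivots (w : ι → G) : Finset ι := {a | w a ∉ span K (w '' Set.Ioi a)}

theorem mem_pivots {w : ι → G} {a : ι} : a ∈ pivots K w ↔ w a ∉ span K (w '' Set.Ioi a) := by
  simp [pivots]

theorem linearIndepOn_pivots (w : ι → G) : LinearIndepOn K w (pivots K w) := by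
  suffices ∀ s : Finset ι, s ⊆ pivots K w → LinearIndepOn K w s from this _ subset_rfl
  intro s
  induction s using Finset.induction_on_min with
  | empty => simp
  | insert a s has ih =>
    intro hs
    rw [coe_insert]
    refine (ih ((subset_insert a s).trans hs)).insert fun h =>
      mem_pivots.1 (hs (mem_insert_self a s)) ?_
    exact span_mono (Set.image_mono fun x hx => has x hx) h

theorem mem_span_image_pivots_inter_Ici (w : ι → G) (a : ι) :
    w a ∈ span K (w '' (pivots K w ∩ Set.Ici a)) := by
  induction a using WellFoundedGT.induction with
  | _ a ih =>
  by_cases ha : a ∈ pivots K w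
  · exact subset_span ⟨a, ⟨ha, le_rfl⟩, rfl⟩
  · refine span_le.2 ?_ (not_not.1 (mem_pivots.not.1 ha))
    rintro _ ⟨b, hb, rfl⟩
    exact span_mono (Set.image_mono (Set.inter_subset_inter_right _ (Set.Ici_subset_Ici.2 hb.le)))
      (ih b hb)

theorem card_filter_pivots (w : ι → G) {p : ι → Prop} [DecidablePred p] (hp : Monotone p) :
    #((pivots K w).filter p) = Module.finrank K (span K (w '' {a | p a})) := by
  have hspan : span K (w '' ((pivots K w).filter p : Set ι)) = span K (w '' {a | p a}) := by
    refine le_antisymm (span_mono (Set.image_mono fun a ha => (mem_filter.1 ha).2)) ?_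
    refine span_le.2 ?_
    rintro _ ⟨a, ha, rfl⟩
    refine span_mono (Set.image_mono ?_) (mem_span_image_pivots_inter_Ici w a)
    rintro b ⟨hb, hab⟩
    exact mem_filter.2 ⟨hb, hp hab ha⟩
  rw [← hspan,
    ((linearIndepOn_pivots w).mono (coe_subset.2 (filter_subset _ _))).finrank_span_image]

end Pivots

section TailSpan

open Submodule Finset

variable {K G : Type*} [Field K] [AddCommGroup G] [Module K G] {N : ℕ}

variable (K) in
/-- In the paper's `1`-based indexing, `span {e_{n+1}, …, e_N}`. -/
def tailSpan (e : Fin N → G) (n : ℕ) : Submodule K G := span K (e '' {a | n ≤ (a : ℕ)})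

theorem map_tailSpan {G' : Type*} [AddCommGroup G'] [Module K G'] (f : G →ₗ[K] G')
    (e : Fin N → G) (n : ℕ) : (tailSpan K e n).map f = tailSpan K (f ∘ e) n := by
  rw [tailSpan, Submodule.map_span, ← Set.image_comp]
  rfl

variable (K) in
theorem tailSpan_zero (e : Fin N → G) : tailSpan K e 0 = span K (Set.range e) := by
  simp [tailSpan]

variable (K) in
theorem finrank_tailSpan (w : Fin N → G) (n : ℕ) :
    Module.finrank K (tailSpan K w n) = #((pivots K w).filter fun a : Fin N => n ≤ (a : ℕ)) :=
  (card_filter_pivots w fun _ _ hab ha => ha.trans hab).symm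

variable (K) in
theorem tailSpan_ne_bot {e : Fin N → G} (he : ∀ a, e a ≠ 0) {n : ℕ} (hn : n < N) :
    tailSpan K e n ≠ ⊥ := by
  rw [Ne, Submodule.eq_bot_iff]
  exact fun h => he ⟨n, hn⟩ (h _ (Submodule.subset_span ⟨⟨n, hn⟩, le_refl n, rfl⟩))

theorem tailSpan_ne_top {e : Fin N → G} (he : LinearIndependent K e) {n : ℕ} (hn : 0 < n)
    (hnN : n < N) : tailSpan K e n ≠ ⊤ := fun h =>
  he.notMem_span_image (s := {a | n ≤ (a : ℕ)}) (x := ⟨0, by omega⟩) (by simpa using hn.ne')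
    (h ▸ Submodule.mem_top)

end TailSpan

section Compactness

open Filter Topology Matrix

theorem IsCompact.eventually_forall_exists_forall_le {X A J : Type*} [TopologicalSpace X]
    [Finite J] {K : Set X} (hK : IsCompact K) {f : A → J → X → ℝ}
    (hf : ∀ α j, Continuous (f α j)) (hpos : ∀ x ∈ K, ∃ α, ∀ j, 0 < f α j x) :
    ∀ᶠ t in 𝓝 (0 : ℝ), ∀ x ∈ K, ∃ α, ∀ j, t ≤ f α j x := by
  refine hK.eventually_forall_of_forall_eventually fun x hx => ?_
  obtain ⟨α, hα⟩ := hpos x hx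
  have hlt : ∀ j, ∀ᶠ z : ℝ × X in 𝓝 (0, x), z.1 < f α j z.2 := fun j =>
    continuous_fst.continuousAt.eventually_lt ((hf α j).comp continuous_snd).continuousAt (hα j)
  filter_upwards [eventually_all.2 hlt] with z hz
  exact ⟨α, fun j => (hz j).le⟩

theorem isCompact_setOf_orthonormal {ι 𝕜 G : Type*} [Fintype ι] [RCLike 𝕜]
    [NormedAddCommGroup G] [InnerProductSpace 𝕜 G] [FiniteDimensional 𝕜 G] :
    IsCompact {v : ι → G | Orthonormal 𝕜 v} := by
  classical
  have := FiniteDimensional.proper_rclike 𝕜 G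
  refine Metric.isCompact_of_isClosed_isBounded ?_
    ((Metric.isBounded_closedBall (x := 0) (r := 1)).subset fun v hv => ?_)
  · have : {v : ι → G | Orthonormal 𝕜 v} =
        ⋂ a, ⋂ b, {v | inner 𝕜 (v a) (v b) = if a = b then (1 : 𝕜) else 0} := by
      ext v
      simp only [orthonormal_iff_ite, Set.mem_ofPred_eq, Set.mem_iInter]
    rw [this]
    exact isClosed_iInter fun a => isClosed_iInter fun b =>
      isClosed_eq (by fun_prop) continuous_const
  · rw [mem_closedBall_zero_iff]
    exact (pi_norm_le_iff_of_nonneg zero_le_one).2 fun a => (hv.1 a).le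

variable {ι J G : Type*} [DecidableEq ι] [Finite J] {F : J → Type*}
  [NormedAddCommGroup G] [InnerProductSpace ℝ G] [FiniteDimensional ℝ G]
  [∀ j, NormedAddCommGroup (F j)] [∀ j, InnerProductSpace ℝ (F j)]

theorem IsCompact.eventually_le_det_gram (L : ∀ j, G →ₗ[ℝ] F j) {K : Set (ι → G)}
    (hK : IsCompact K) (Q : (J → Finset ι) → Prop)
    (hQ : ∀ v ∈ K, ∃ I, Q I ∧ ∀ j, LinearIndependent ℝ (fun a : I j => L j (v a))) :
    ∀ᶠ t in 𝓝 (0 : ℝ), ∀ v ∈ K, ∃ I, Q I ∧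
      ∀ j, t ≤ (gram ℝ (fun a : I j => L j (v a))).det := by
  have hcont : ∀ (I : {I // Q I}) j,
      Continuous fun v : ι → G => (gram ℝ (fun a : I.1 j => L j (v a))).det := fun I j =>
    Continuous.matrix_det <| continuous_matrix fun a b =>
      ((L j).continuous_of_finiteDimensional.comp (continuous_apply _)).inner
        ((L j).continuous_of_finiteDimensional.comp (continuous_apply _))
  filter_upwards [hK.eventually_forall_exists_forall_le hcont fun v hv =>
    let ⟨I, hQI, hli⟩ := hQ v hv
    ⟨⟨I, hQI⟩, fun j => (posDef_gram_of_linearIndependent (hli j)).det_pos⟩] with t ht v hv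
  obtain ⟨⟨I, hQI⟩, hle⟩ := ht v hv
  exact ⟨I, hQI, hle⟩

theorem exists_pos_forall_le_det_gram {κ : Type*} [Finite κ] [Fintype ι]
    (V : κ → Submodule ℝ G) (L : ∀ j, G →ₗ[ℝ] F j) (Q : (ι → κ) → (J → Finset ι) → Prop)
    (hQ : ∀ τ (v : ι → G), Orthonormal ℝ v → (∀ a, v a ∈ V (τ a)) →
      ∃ I, Q τ I ∧ ∀ j, LinearIndependent ℝ (fun a : I j => L j (v a))) :
    ∃ t > 0, ∀ τ (v : ι → G), Orthonormal ℝ v → (∀ a, v a ∈ V (τ a)) →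
      ∃ I, Q τ I ∧ ∀ j, t ≤ (gram ℝ (fun a : I j => L j (v a))).det := by
  have hK : ∀ τ : ι → κ,
      IsCompact ({v : ι → G | Orthonormal ℝ v} ∩ ⋂ a, (· a) ⁻¹' V (τ a)) :=
    fun τ => isCompact_setOf_orthonormal.inter_right <| isClosed_iInter fun a =>
      (V (τ a)).closed_of_finiteDimensional.preimage (continuous_apply a)
  obtain ⟨t, ht, h⟩ := (eventually_all.2 fun τ => (hK τ).eventually_le_det_gram L (Q τ)
    fun v hv => hQ τ v hv.1 (Set.mem_iInter.1 hv.2)).exists_gt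
  exact ⟨t, ht, fun τ v hv hvτ => h τ v ⟨hv, Set.mem_iInter.2 hvτ⟩⟩

end Compactness

section Gap

open Filter Topology

theorem exists_pos_add_le_of_sum_mul_lt {κ J : Type*} [Fintype κ] [Fintype J]
    (a : κ → ℝ) (b : J → ℝ) (p : κ → ℕ) (q : J → ℕ) :
    ∃ δ > 0, ∀ s ≤ p, ∀ r ≤ q, ∑ i, a i * s i < ∑ j, b j * r j →
      ∑ i, a i * s i + δ ≤ ∑ j, b j * r j := by
  classical
  set gap : (κ → ℕ) × (J → ℕ) → ℝ := fun x => ∑ j, b j * x.2 j - ∑ i, a i * x.1 i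
  have hfin : (Set.Iic p ×ˢ Set.Iic q).Finite := (Set.finite_Iic p).prod (Set.finite_Iic q)
  have hev : ∀ᶠ δ in 𝓝 (0 : ℝ), ∀ x ∈ Set.Iic p ×ˢ Set.Iic q, 0 < gap x → δ ≤ gap x := by
    refine hfin.eventually_all.2 fun x _ => ?_
    by_cases hx : 0 < gap x
    · exact (eventually_lt_nhds hx).mono fun δ hδ _ => hδ.le
    · exact Eventually.of_forall fun δ h => absurd h hx
  obtain ⟨δ, hδ, h⟩ := hev.exists_gt
  refine ⟨δ, hδ, fun s hs r hr hlt => ?_⟩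
  have := h (s, r) ⟨hs, hr⟩ (sub_pos.2 hlt)
  linarith

end Gap

namespace FRBL

open Finset

section AdaptedFamily

variable {k N : ℕ} {E : Fin k → Type*} [∀ i, NormedAddCommGroup (E i)]
  [∀ i, InnerProductSpace ℝ (E i)]

@[simp]
theorem projL_singleL (i : Fin k) (x : E i) : projL E i (singleL E i x) = x := by
  simp [projL, singleL, toPi]

theorem projL_singleL_of_ne {i i' : Fin k} (h : i' ≠ i) (x : E i') :
    projL E i (singleL E i' x) = 0 := by
  simp [projL, singleL, toPi, Pi.single_eq_of_ne (Ne.symm h)]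

variable {e : Fin N → PiLp 2 E} {ι : Fin N → Fin k}

theorem productForm_tailSpan (he : ∀ a, e a ∈ range (singleL E (ι a))) (n : ℕ) :
    ProductForm E (tailSpan ℝ e n) := by
  intro x hx i
  refine (Submodule.map_span_le (singleL E i ∘ₗ projL E i) _ (tailSpan ℝ e n)).2 ?_ ⟨x, hx, rfl⟩
  rintro _ ⟨a, ha, rfl⟩
  obtain ⟨y, hy⟩ := he a
  by_cases hai : ι a = i
  · subst hai
    rw [LinearMap.comp_apply, ← hy, projL_singleL, hy]
    exact Submodule.subset_span ⟨a, ha, rfl⟩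
  · rw [LinearMap.comp_apply, ← hy, projL_singleL_of_ne hai, map_zero]
    exact zero_mem _

theorem finrank_map_projL_tailSpan (hli : LinearIndependent ℝ e)
    (he : ∀ a, e a ∈ range (singleL E (ι a))) (i : Fin k) (n : ℕ) :
    Module.finrank ℝ ((tailSpan ℝ e n).map (projL E i)) =
      #{a | ι a = i ∧ n ≤ (a : ℕ)} := by
  have hli_i : LinearIndepOn ℝ (projL E i ∘ e) (univ.filter (ι · = i) : Set (Fin N)) := by
    refine LinearIndepOn.of_comp (singleL E i) ((hli.linearIndepOn _).congr fun a ha => ?_)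
    obtain ⟨y, hy⟩ := he a
    obtain rfl : ι a = i := (mem_filter.1 ha).2
    simp [← hy]
  have hzero : ∀ a ∉ univ.filter (ι · = i), (projL E i ∘ e) a = 0 := fun a ha => by
    obtain ⟨y, hy⟩ := he a
    simpa [← hy] using projL_singleL_of_ne (by simpa using ha) y
  rw [map_tailSpan, tailSpan, hli_i.finrank_span_image_eq_card_filter hzero, filter_filter]

end AdaptedFamily

section Datum

variable {k m : ℕ} (E : Fin k → Type*) (F : Fin m → Type*)
  [∀ i, NormedAddCommGroup (E i)] [∀ i, InnerProductSpace ℝ (E i)]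
  [∀ j, NormedAddCommGroup (F j)] [∀ j, InnerProductSpace ℝ (F j)]
  (c : Fin k → ℝ) (d : Fin m → ℝ) (B : ∀ i j, E i →ₗ[ℝ] F j)

variable {E F c d B} in
theorem Simple.sum_finrank_lt (hsimple : Simple E F c d B) (hdim : DimCond E F c d B)
    {T : Submodule ℝ (PiLp 2 E)} (hbot : T ≠ ⊥) (htop : T ≠ ⊤) (hT : ProductForm E T) :
    ∑ i, c i * (Module.finrank ℝ (T.map (projL E i)) : ℝ) <
      ∑ j, d j * (Module.finrank ℝ (T.map (Bop E F B j)) : ℝ) :=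
  (hdim T hT).lt_of_ne fun h => hsimple T ⟨hbot, htop, hT, h⟩

variable [∀ j, FiniteDimensional ℝ (F j)]

/-- At `T = E₀` the scaling condition turns the dimension condition into an equality, which then
holds term by term because every `d_j` is positive. -/
theorem range_Bop_eq_top (hd : ∀ j, 0 < d j) (hscal : ScalingCond E F c d)
    (hdim : DimCond E F c d B) (j : Fin m) : range (Bop E F B j) = ⊤ := by
  have hle : ∀ j ∈ univ, d j * (Module.finrank ℝ ((⊤ : Submodule ℝ (PiLp 2 E)).map
      (Bop E F B j)) : ℝ) ≤ d j * Module.finrank ℝ (F j) := fun j _ =>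
    mul_le_mul_of_nonneg_left (by exact_mod_cast Submodule.finrank_le _) (hd j).le
  have hproj : ∀ i, Module.finrank ℝ ((⊤ : Submodule ℝ (PiLp 2 E)).map (projL E i)) =
      Module.finrank ℝ (E i) := fun i => by
    rw [Submodule.map_top, range_eq_top.2 fun x => ⟨singleL E i x, projL_singleL i x⟩,
      finrank_top]
  have hsum := le_antisymm (sum_le_sum hle) <| by
    rw [ScalingCond] at hscal
    rw [← hscal]
    simpa only [hproj] using hdim ⊤ fun _ _ _ => Submodule.mem_top
  have hj := (sum_eq_sum_iff_of_le hle).1 hsum j (mem_univ j)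
  rw [← Submodule.map_top]
  exact Submodule.eq_top_of_finrank_eq (by exact_mod_cast mul_left_cancel₀ (hd j).ne' hj)

variable [∀ i, FiniteDimensional ℝ (E i)]

theorem exists_pos_add_le_of_sum_finrank_lt :
    ∃ δ > 0, ∀ T : Submodule ℝ (PiLp 2 E),
      ∑ i, c i * (Module.finrank ℝ (T.map (projL E i)) : ℝ) <
          ∑ j, d j * (Module.finrank ℝ (T.map (Bop E F B j)) : ℝ) →
        ∑ i, c i * (Module.finrank ℝ (T.map (projL E i)) : ℝ) + δ ≤
          ∑ j, d j * (Module.finrank ℝ (T.map (Bop E F B j)) : ℝ) := by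
  obtain ⟨δ, hδ, h⟩ := exists_pos_add_le_of_sum_mul_lt c d (fun i => Module.finrank ℝ (E i))
    (fun j => Module.finrank ℝ (F j))
  exact ⟨δ, hδ, fun T => h _ (fun i => Submodule.finrank_le _) _ fun j => Submodule.finrank_le _⟩

def IsAdmissibleSelection (δ : ℝ) (ι : Fin (Module.finrank ℝ (PiLp 2 E)) → Fin k)
    (I : Fin m → Finset (Fin (Module.finrank ℝ (PiLp 2 E)))) : Prop :=
  (∀ j, #(I j) = Module.finrank ℝ (F j)) ∧
  (∀ n : ℕ, ∑ i, c i * (#{a | ι a = i ∧ n ≤ (a : ℕ)} : ℝ) ≤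
      ∑ j, d j * (#((I j).filter fun a => n ≤ a.val) : ℝ)) ∧
  (Simple E F c d B → ∀ n : ℕ, 0 < n → n < Module.finrank ℝ (PiLp 2 E) →
    ∑ i, c i * (#{a | ι a = i ∧ n ≤ (a : ℕ)} : ℝ) + δ ≤
      ∑ j, d j * (#((I j).filter fun a => n ≤ a.val) : ℝ))

theorem exists_pos_isAdmissibleSelection_pivots (hd : ∀ j, 0 < d j)
    (hscal : ScalingCond E F c d) (hdim : DimCond E F c d B) :
    ∃ δ > 0, ∀ {e : Fin (Module.finrank ℝ (PiLp 2 E)) → PiLp 2 E}, LinearIndependent ℝ e →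
      ∀ {ι : Fin (Module.finrank ℝ (PiLp 2 E)) → Fin k}, (∀ a, e a ∈ range (singleL E (ι a))) →
        IsAdmissibleSelection E F c d B δ ι fun j => pivots ℝ (Bop E F B j ∘ e) := by
  obtain ⟨δ, hδ, hgap⟩ := exists_pos_add_le_of_sum_finrank_lt E F c d B
  refine ⟨δ, hδ, fun {e} hli {ι} he => ?_⟩
  have hcount : ∀ n : ℕ,
      ∑ i, c i * (#{a | ι a = i ∧ n ≤ (a : ℕ)} : ℝ) =
        ∑ i, c i * (Module.finrank ℝ ((tailSpan ℝ e n).map (projL E i)) : ℝ) ∧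
      ∑ j, d j * (#((pivots ℝ (Bop E F B j ∘ e)).filter fun a => n ≤ a.val) : ℝ) =
        ∑ j, d j * (Module.finrank ℝ ((tailSpan ℝ e n).map (Bop E F B j)) : ℝ) := fun n =>
    ⟨sum_congr rfl fun i _ => by rw [finrank_map_projL_tailSpan hli he],
      sum_congr rfl fun j _ => by rw [map_tailSpan, finrank_tailSpan]⟩
  refine ⟨fun j => ?_, fun n => ?_, fun hsimple n hn hnN => ?_⟩
  · have hspan : tailSpan ℝ e 0 = ⊤ := by
      rw [tailSpan_zero, hli.span_eq_top_of_card_eq_finrank' (Fintype.card_fin _)]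
    have := finrank_tailSpan ℝ (Bop E F B j ∘ e) 0
    rwa [← map_tailSpan, hspan, Submodule.map_top, range_Bop_eq_top E F c d B hd hscal hdim,
      finrank_top, filter_true_of_mem fun a _ => Nat.zero_le _, eq_comm] at this
  · rw [(hcount n).1, (hcount n).2]
    exact hdim _ (productForm_tailSpan he n)
  · rw [(hcount n).1, (hcount n).2]
    exact hgap _ (hsimple.sum_finrank_lt hdim (tailSpan_ne_bot ℝ hli.ne_zero hnN)
      (tailSpan_ne_top hli hn hnN) (productForm_tailSpan he n))

end Datum

variable {k m : ℕ}
  (E : Fin k → Type*) (F : Fin m → Type*)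
  [∀ i, NormedAddCommGroup (E i)] [∀ i, InnerProductSpace ℝ (E i)]
  [∀ i, FiniteDimensional ℝ (E i)]
  [∀ i, MeasurableSpace (E i)] [∀ i, BorelSpace (E i)]
  [∀ j, NormedAddCommGroup (F j)] [∀ j, InnerProductSpace ℝ (F j)]
  [∀ j, FiniteDimensional ℝ (F j)]
  [∀ j, MeasurableSpace (F j)] [∀ j, BorelSpace (F j)]

theorem basis_selection
    (c : Fin k → ℝ) (d : Fin m → ℝ) (B : ∀ i j, E i →ₗ[ℝ] F j)
    (hd : ∀ j, 0 < d j)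
    (hscal : ScalingCond E F c d) (hdim : DimCond E F c d B) :
    (∃ c₀ : ℝ, 0 < c₀ ∧
      ∀ (e : OrthonormalBasis (Fin (Module.finrank ℝ (PiLp 2 E))) ℝ (PiLp 2 E))
        (ι : Fin (Module.finrank ℝ (PiLp 2 E)) → Fin k),
        (∀ n, e n ∈ LinearMap.range (singleL E (ι n))) →
        ∃ I : Fin m → Finset (Fin (Module.finrank ℝ (PiLp 2 E))),
          (∀ j, (I j).card = Module.finrank ℝ (F j)) ∧
          (∀ n : ℕ, n ≤ Module.finrank ℝ (PiLp 2 E) →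
            (∑ i, c i *
              ((Finset.univ.filter (fun a => ι a = i ∧ n ≤ (a : ℕ))).card : ℝ)) ≤
              ∑ j, d j * (((I j).filter (fun a => n ≤ a.val)).card : ℝ)) ∧
          (∀ j, c₀ ^ 2 ≤ Matrix.det (Matrix.of
            (fun a b : ↥(I j) => ⟪Bop E F B j (e a), Bop E F B j (e b)⟫)))) ∧
    (Simple E F c d B →
      ∃ c₀ : ℝ, 0 < c₀ ∧ ∃ δ : ℝ, 0 < δ ∧
      ∀ (e : OrthonormalBasis (Fin (Module.finrank ℝ (PiLp 2 E))) ℝ (PiLp 2 E))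
        (ι : Fin (Module.finrank ℝ (PiLp 2 E)) → Fin k),
        (∀ n, e n ∈ LinearMap.range (singleL E (ι n))) →
        ∃ I : Fin m → Finset (Fin (Module.finrank ℝ (PiLp 2 E))),
          (∀ j, (I j).card = Module.finrank ℝ (F j)) ∧
          (∀ n : ℕ, n ≤ Module.finrank ℝ (PiLp 2 E) →
            (∑ i, c i *
              ((Finset.univ.filter (fun a => ι a = i ∧ n ≤ (a : ℕ))).card : ℝ)) ≤
              ∑ j, d j * (((I j).filter (fun a => n ≤ a.val)).card : ℝ)) ∧
          (∀ n : ℕ, 0 < n → n < Module.finrank ℝ (PiLp 2 E) →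
            (∑ i, c i *
              ((Finset.univ.filter (fun a => ι a = i ∧ n ≤ (a : ℕ))).card : ℝ)) + δ ≤
              ∑ j, d j * (((I j).filter (fun a => n ≤ a.val)).card : ℝ)) ∧
          (∀ j, c₀ ^ 2 ≤ Matrix.det (Matrix.of
            (fun a b : ↥(I j) => ⟪Bop E F B j (e a), Bop E F B j (e b)⟫)))) := by
  obtain ⟨δ, hδ, hpivots⟩ := exists_pos_isAdmissibleSelection_pivots E F c d B hd hscal hdim
  obtain ⟨t, ht, hsel⟩ := exists_pos_forall_le_det_gram (fun i => range (singleL E i))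
    (Bop E F B) (IsAdmissibleSelection E F c d B δ) fun ι v hv hvι =>
      ⟨_, hpivots hv.linearIndependent hvι, fun j => linearIndepOn_pivots _⟩
  have key : ∀ (e : OrthonormalBasis (Fin (Module.finrank ℝ (PiLp 2 E))) ℝ (PiLp 2 E)) ι,
      (∀ n, e n ∈ range (singleL E (ι n))) → ∃ I, IsAdmissibleSelection E F c d B δ ι I ∧
        ∀ j, √t ^ 2 ≤ Matrix.det (Matrix.of
          (fun a b : ↥(I j) => ⟪Bop E F B j (e a), Bop E F B j (e b)⟫)) := fun e ι he => by
    obtain ⟨I, hI, hdet⟩ := hsel ι e e.orthonormal he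
    exact ⟨I, hI, fun j => (Real.sq_sqrt ht.le).symm ▸ hdet j⟩
  refine ⟨⟨√t, Real.sqrt_pos.2 ht, fun e ι he => ?_⟩,
    fun hsimple => ⟨√t, Real.sqrt_pos.2 ht, δ, hδ, fun e ι he => ?_⟩⟩
  · obtain ⟨I, ⟨hcard, hle, -⟩, hdet⟩ := key e ι he
    exact ⟨I, hcard, fun n _ => hle n, hdet⟩
  · obtain ⟨I, ⟨hcard, hle, hlt⟩, hdet⟩ := key e ι he
    exact ⟨I, hcard, fun n _ => hle n, hlt hsimple, hdet⟩

end FRBL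
end
end
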